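/- arXiv:1106.2774 — 10 statements merged into one kernel-verified Lean document; each statement's English description precedes it below -/
import Mathlib

section
/- Let z ∈ ℝ^n, let I ⊆ {1,…,n} with |I| = k, and let 1 ≤ l ≤ k. Suppose L ⊆ Iᶜ with |L| = l satisfies |z_j| ≥ |z_{j'}| for every j ∈ L and every j' ∈ Iᶜ\L, and suppose S ⊆ I ∪ L with |S| = k satisfies |z_j| ≥ |z_{j'}| for every j ∈ S and every j' ∈ (I ∪ L)\S. Define y ∈ ℝ^n by y_j = z_j for j ∈ S and y_j = 0 otherwise. Then y minimizes ‖y' − z‖ over all y' ∈ ℝ^n satisfying |supp(y')| ≤ k and |supp(y')\I| ≤ l; that is, the partial hard thresholding operator H_k(z; I, l) can be computed by taking the top l entries of |z| outside I, forming J = I ∪ L, and hard thresholding z_J to its top k entries. -/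
open Finset Matrix

noncomputable def nrm {d : ℕ} (x : Fin d → ℝ) : ℝ := Real.sqrt (∑ i, (x i)^2)

noncomputable def supp {d : ℕ} (x : Fin d → ℝ) : Finset (Fin d) := Finset.univ.filter (fun i => x i ≠ 0)

def restr {d : ℕ} (x : Fin d → ℝ) (I : Finset (Fin d)) : Fin d → ℝ := fun i => if i ∈ I then x i else 0

noncomputable def dotp {d : ℕ} (x y : Fin d → ℝ) : ℝ := ∑ i, x i * y i

def RIP {m n : ℕ} (A : Matrix (Fin m) (Fin n) ℝ) (s : ℕ) (δ : ℝ) : Prop :=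
  0 ≤ δ ∧ δ < 1 ∧ ∀ x : Fin n → ℝ, (supp x).card ≤ s →
    (1 - δ) * (nrm x)^2 ≤ (nrm (A.mulVec x))^2 ∧ (nrm (A.mulVec x))^2 ≤ (1 + δ) * (nrm x)^2

def lsSol {m n : ℕ} (A : Matrix (Fin m) (Fin n) ℝ) (b : Fin m → ℝ) (I : Finset (Fin n)) (x : Fin n → ℝ) : Prop :=
  supp x ⊆ I ∧ ∀ i ∈ I, Aᵀ.mulVec (A.mulVec x - b) i = 0

noncomputable def obj {m n : ℕ} (A : Matrix (Fin m) (Fin n) ℝ) (b : Fin m → ℝ) (x : Fin n → ℝ) : ℝ :=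
  (1/2) * (nrm (A.mulVec x - b))^2

lemma sum_le_aux {n : ℕ} (f : Fin n → ℝ) (A B : Finset (Fin n))
    (hcard : A.card ≤ B.card) (hpos : ∀ b ∈ B, 0 ≤ f b)
    (hcmp : ∀ a ∈ A \ B, ∀ b ∈ B \ A, f a ≤ f b) :
    ∑ a ∈ A, f a ≤ ∑ b ∈ B, f b := by
  have h1 := Finset.card_sdiff_add_card_inter A B
  have h2 := Finset.card_sdiff_add_card_inter B A
  rw [Finset.inter_comm] at h2
  have hAB : (A \ B).card ≤ (B \ A).card := by omega
  have key : ∑ a ∈ A \ B, f a ≤ ∑ b ∈ B \ A, f b := by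
    rcases (B \ A).eq_empty_or_nonempty with he | hne
    · have hA : A \ B = ∅ := Finset.card_eq_zero.mp
        (Nat.le_antisymm (by simpa [he] using hAB) (Nat.zero_le _))
      simp [hA, he]
    · obtain ⟨b₀, hb₀, hmin⟩ := Finset.exists_min_image (B \ A) f hne
      have h0 : 0 ≤ f b₀ := hpos b₀ (Finset.sdiff_subset hb₀)
      calc ∑ a ∈ A \ B, f a ≤ (A \ B).card • f b₀ :=
            Finset.sum_le_card_nsmul _ _ _ (fun a ha => hcmp a ha b₀ hb₀)
        _ ≤ (B \ A).card • f b₀ := by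
            rw [nsmul_eq_mul, nsmul_eq_mul]
            exact mul_le_mul_of_nonneg_right (Nat.cast_le.mpr hAB) h0
        _ ≤ ∑ b ∈ B \ A, f b := Finset.card_nsmul_le_sum _ _ _ (fun b hb => hmin b hb)
  calc ∑ a ∈ A, f a = ∑ a ∈ A ∩ B, f a + ∑ a ∈ A \ B, f a :=
        (Finset.sum_inter_add_sum_sdiff A B f).symm
    _ ≤ ∑ a ∈ A ∩ B, f a + ∑ b ∈ B \ A, f b := by linarith
    _ = ∑ b ∈ B, f b := by rw [Finset.inter_comm]; exact Finset.sum_inter_add_sum_sdiff B A f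

theorem stmt0 {n k l : ℕ} (z : Fin n → ℝ) (I : Finset (Fin n)) (hI : I.card = k)
    (hl1 : 1 ≤ l) (hlk : l ≤ k)
    (L : Finset (Fin n)) (hLsub : L ⊆ Iᶜ) (hLcard : L.card = l)
    (hLtop : ∀ j ∈ L, ∀ j' ∈ Iᶜ \ L, |z j'| ≤ |z j|)
    (S : Finset (Fin n)) (hSsub : S ⊆ I ∪ L) (hScard : S.card = k)
    (hStop : ∀ j ∈ S, ∀ j' ∈ (I ∪ L) \ S, |z j'| ≤ |z j|)
    (y : Fin n → ℝ) (hy : y = restr z S) :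
    (supp y).card ≤ k ∧ (supp y \ I).card ≤ l ∧
    ∀ y' : Fin n → ℝ, (supp y').card ≤ k → (supp y' \ I).card ≤ l →
      nrm (fun i => y i - z i) ≤ nrm (fun i => y' i - z i) := by
  set f : Fin n → ℝ := fun i => (z i) ^ 2 with hf
  have hfpos : ∀ i, 0 ≤ f i := fun i => sq_nonneg _
  have hsuppS : supp y ⊆ S := by
    intro i hi
    simp only [supp, Finset.mem_filter, hy, restr] at hi
    by_contra h
    simp [h] at hi
  refine ⟨le_of_le_of_eq (Finset.card_le_card hsuppS) hScard, ?_, ?_⟩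
  · have : supp y \ I ⊆ L := by
      intro i hi
      rcases Finset.mem_sdiff.mp hi with ⟨hi1, hi2⟩
      rcases Finset.mem_union.mp (hSsub (hsuppS hi1)) with h | h
      · exact absurd h hi2
      · exact h
    exact le_of_le_of_eq (Finset.card_le_card this) hLcard
  · intro y' hk' hl'
    set T : Finset (Fin n) := supp y' with hT
    -- combinatorial core : ∑ T f ≤ ∑ S f
    have hTI : ((T \ I) ∩ L).card ≤ (T \ I).card :=
      Finset.card_le_card (Finset.inter_subset_left)
    obtain ⟨L', hL'1, hL'2, hL'3⟩ := Finset.exists_subsuperset_card_eq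
      (s := (T \ I) ∩ L) (t := L) (n := (T \ I).card)
      Finset.inter_subset_right hTI (by rw [hLcard]; exact hl')
    have step1 : ∑ i ∈ T \ I, f i ≤ ∑ i ∈ L', f i := by
      apply sum_le_aux f _ _ (by omega) (fun b _ => hfpos b)
      intro a ha b hb
      rcases Finset.mem_sdiff.mp ha with ⟨ha1, ha2⟩
      have haL : a ∉ L := fun h => ha2 (hL'1 (Finset.mem_inter.mpr ⟨ha1, h⟩))
      have haI : a ∉ I := (Finset.mem_sdiff.mp ha1).2
      have := hLtop b (hL'2 (Finset.mem_sdiff.mp hb).1) a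
        (Finset.mem_sdiff.mpr ⟨Finset.mem_compl.mpr haI, haL⟩)
      calc f a = |z a| ^ 2 := (sq_abs _).symm
        _ ≤ |z b| ^ 2 := pow_le_pow_left₀ (abs_nonneg _) this 2
        _ = f b := sq_abs _
    set U : Finset (Fin n) := (T ∩ I) ∪ L' with hU
    have hdisj : Disjoint (T ∩ I) L' := by
      apply Finset.disjoint_left.mpr
      intro a ha hb
      exact Finset.mem_compl.mp (hLsub (hL'2 hb)) (Finset.mem_inter.mp ha).2
    have hUcard : U.card ≤ k := by
      rw [hU, Finset.card_union_of_disjoint hdisj, hL'3]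
      have := Finset.card_sdiff_add_card_inter T I
      omega
    have hUsub : U ⊆ I ∪ L := by
      intro a ha
      rcases Finset.mem_union.mp ha with h | h
      · exact Finset.mem_union_left _ (Finset.mem_inter.mp h).2
      · exact Finset.mem_union_right _ (hL'2 h)
    have step2 : ∑ i ∈ T, f i ≤ ∑ i ∈ U, f i := by
      rw [hU, Finset.sum_union hdisj]
      have := Finset.sum_inter_add_sum_sdiff T I f
      linarith
    have step3 : ∑ i ∈ U, f i ≤ ∑ i ∈ S, f i := by
      apply sum_le_aux f _ _ (hUcard.trans_eq hScard.symm) (fun b _ => hfpos b)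
      intro a ha b hb
      have := hStop b (Finset.mem_sdiff.mp hb).1 a
        (Finset.mem_sdiff.mpr ⟨hUsub (Finset.mem_sdiff.mp ha).1, (Finset.mem_sdiff.mp ha).2⟩)
      calc f a = |z a| ^ 2 := (sq_abs _).symm
        _ ≤ |z b| ^ 2 := pow_le_pow_left₀ (abs_nonneg _) this 2
        _ = f b := sq_abs _
    have hcore : ∑ i ∈ T, f i ≤ ∑ i ∈ S, f i := le_trans step2 step3
    -- norm computation
    have hyval : ∑ i, (y i - z i) ^ 2 = ∑ i ∈ Sᶜ, f i := by
      rw [← Finset.sum_add_sum_compl S (fun i => (y i - z i) ^ 2)]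
      have h1 : ∑ i ∈ S, (y i - z i) ^ 2 = 0 := by
        apply Finset.sum_eq_zero
        intro i hi; rw [hy]; simp [restr, hi]
      have h2 : ∑ i ∈ Sᶜ, (y i - z i) ^ 2 = ∑ i ∈ Sᶜ, f i := by
        apply Finset.sum_congr rfl
        intro i hi
        have hni : i ∉ S := Finset.mem_compl.mp hi
        rw [hy]; simp [restr, hni, hf]
      rw [h1, h2, zero_add]
    have hy'val : ∑ i ∈ Tᶜ, f i ≤ ∑ i, (y' i - z i) ^ 2 := by
      calc ∑ i ∈ Tᶜ, f i = ∑ i ∈ Tᶜ, (y' i - z i) ^ 2 := by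
            apply Finset.sum_congr rfl
            intro i hi
            have : y' i = 0 := by
              by_contra h
              exact Finset.mem_compl.mp hi (by simp [hT, supp, h])
            rw [this]; simp [hf]
        _ ≤ ∑ i, (y' i - z i) ^ 2 :=
            Finset.sum_le_sum_of_subset_of_nonneg (Finset.subset_univ _)
              (fun i _ _ => sq_nonneg _)
    have hcompl : ∑ i ∈ Sᶜ, f i ≤ ∑ i ∈ Tᶜ, f i := by
      have hS := Finset.sum_add_sum_compl S f
      have hTt := Finset.sum_add_sum_compl T f
      linarith
    unfold nrm
    apply Real.sqrt_le_sqrt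
    calc ∑ i, (y i - z i) ^ 2 = ∑ i ∈ Sᶜ, f i := hyval
      _ ≤ ∑ i ∈ Tᶜ, f i := hcompl
      _ ≤ ∑ i, (y' i - z i) ^ 2 := hy'val
end

section
/- Suppose A satisfies the RIP of order s with constant δ. Then for all u, v ∈ ℝ^n with |supp(u) ∪ supp(v)| ≤ s, one has |⟨u, v⟩ − ⟨Au, Av⟩| ≤ δ‖u‖‖v‖. In particular, for any S ⊆ {1,…,n} with |S| ≤ s, the operator norm of I − A_Sᵀ A_S is at most δ, where A_S is the submatrix of columns of A indexed by S. -/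
open Finset Matrix

lemma nrm_sq {d : ℕ} (x : Fin d → ℝ) : (nrm x)^2 = ∑ i, (x i)^2 := by
  rw [nrm, Real.sq_sqrt]
  exact Finset.sum_nonneg fun i _ => sq_nonneg _

lemma nrm_nonneg {d : ℕ} (x : Fin d → ℝ) : 0 ≤ nrm x := Real.sqrt_nonneg _

lemma dotp_self {d : ℕ} (x : Fin d → ℝ) : dotp x x = (nrm x)^2 := by
  rw [nrm_sq, dotp]; exact Finset.sum_congr rfl fun i _ => (sq (x i)).symm

lemma nrm_eq_zero {d : ℕ} {x : Fin d → ℝ} (h : nrm x = 0) : x = 0 := by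
  have h2 : ∑ i, (x i)^2 = 0 := by rw [← nrm_sq, h]; ring
  funext i
  have := (Finset.sum_eq_zero_iff_of_nonneg (fun i _ => sq_nonneg (x i))).1 h2 i (Finset.mem_univ i)
  exact pow_eq_zero_iff two_ne_zero |>.mp this

lemma supp_add {d : ℕ} (u v : Fin d → ℝ) : supp (u + v) ⊆ supp u ∪ supp v := by
  intro i hi
  simp only [supp, Finset.mem_filter, Finset.mem_union, Finset.mem_univ, true_and,
    Pi.add_apply] at *
  by_contra hc
  push_neg at hc
  exact hi (by rw [hc.1, hc.2]; ring)

lemma supp_sub {d : ℕ} (u v : Fin d → ℝ) : supp (u - v) ⊆ supp u ∪ supp v := by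
  intro i hi
  simp only [supp, Finset.mem_filter, Finset.mem_union, Finset.mem_univ, true_and,
    Pi.sub_apply] at *
  by_contra hc
  push_neg at hc
  exact hi (by rw [hc.1, hc.2]; ring)

lemma supp_smul {d : ℕ} (c : ℝ) (u : Fin d → ℝ) : supp (c • u) ⊆ supp u := by
  intro i hi
  simp only [supp, Finset.mem_filter, Finset.mem_univ, true_and, Pi.smul_apply,
    smul_eq_mul] at *
  exact fun h => hi (by rw [h]; ring)

lemma dotp_eq_dotProduct {d : ℕ} (x y : Fin d → ℝ) : dotp x y = x ⬝ᵥ y := rfl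

lemma nrm_smul {d : ℕ} (c : ℝ) (x : Fin d → ℝ) : nrm (c • x) = |c| * nrm x := by
  rw [nrm, nrm, ← Real.sqrt_sq_eq_abs, ← Real.sqrt_mul (sq_nonneg c), Finset.mul_sum]
  congr 1
  exact Finset.sum_congr rfl fun i _ => by simp [Pi.smul_apply, smul_eq_mul]; ring

theorem stmt1 {m n : ℕ} (A : Matrix (Fin m) (Fin n) ℝ) (s : ℕ) (δ : ℝ)
    (hRIP : RIP A s δ) :
    (∀ u v : Fin n → ℝ, (supp u ∪ supp v).card ≤ s →
      |dotp u v - dotp (A.mulVec u) (A.mulVec v)| ≤ δ * nrm u * nrm v) ∧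
    (∀ S : Finset (Fin n), S.card ≤ s → ∀ w : Fin n → ℝ, supp w ⊆ S →
      nrm (restr (fun i => w i - Aᵀ.mulVec (A.mulVec w) i) S) ≤ δ * nrm w) := by
  obtain ⟨hδ0, hδ1, hA⟩ := hRIP
  -- Q bound : |nrm x ^2 - nrm (Ax)^2| ≤ δ * nrm x ^2 for sparse x
  have hQ : ∀ x : Fin n → ℝ, (supp x).card ≤ s →
      |(nrm x)^2 - (nrm (A.mulVec x))^2| ≤ δ * (nrm x)^2 := by
    intro x hx
    obtain ⟨h1, h2⟩ := hA x hx
    rw [abs_le]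
    constructor <;> nlinarith [sq_nonneg (nrm x)]
  -- core bound
  have core : ∀ u v : Fin n → ℝ, (supp u ∪ supp v).card ≤ s →
      |dotp u v - dotp (A.mulVec u) (A.mulVec v)| ≤ δ * ((nrm u)^2 + (nrm v)^2) / 2 := by
    intro u v huv
    have hpc : (supp (u + v)).card ≤ s :=
      le_trans (Finset.card_le_card (supp_add u v)) huv
    have hmc : (supp (u - v)).card ≤ s :=
      le_trans (Finset.card_le_card (supp_sub u v)) huv
    have hp := hQ (u + v) hpc
    have hm := hQ (u - v) hmc
    -- expand everything into sums
    have e1 : (nrm (u+v))^2 = (nrm u)^2 + 2 * dotp u v + (nrm v)^2 := by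
      rw [nrm_sq, nrm_sq, nrm_sq, dotp, Finset.mul_sum, ← Finset.sum_add_distrib,
        ← Finset.sum_add_distrib]
      exact Finset.sum_congr rfl fun i _ => by simp [Pi.add_apply]; ring
    have e2 : (nrm (u-v))^2 = (nrm u)^2 - 2 * dotp u v + (nrm v)^2 := by
      rw [nrm_sq, nrm_sq, nrm_sq, dotp, Finset.mul_sum, ← Finset.sum_sub_distrib,
        ← Finset.sum_add_distrib]
      exact Finset.sum_congr rfl fun i _ => by simp [Pi.sub_apply]; ring
    have e3 : (nrm (A.mulVec (u+v)))^2
        = (nrm (A.mulVec u))^2 + 2 * dotp (A.mulVec u) (A.mulVec v) + (nrm (A.mulVec v))^2 := by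
      rw [Matrix.mulVec_add, nrm_sq, nrm_sq, nrm_sq, dotp, Finset.mul_sum,
        ← Finset.sum_add_distrib, ← Finset.sum_add_distrib]
      exact Finset.sum_congr rfl fun i _ => by simp [Pi.add_apply]; ring
    have e4 : (nrm (A.mulVec (u-v)))^2
        = (nrm (A.mulVec u))^2 - 2 * dotp (A.mulVec u) (A.mulVec v) + (nrm (A.mulVec v))^2 := by
      rw [Matrix.mulVec_sub, nrm_sq, nrm_sq, nrm_sq, dotp, Finset.mul_sum,
        ← Finset.sum_sub_distrib, ← Finset.sum_add_distrib]
      exact Finset.sum_congr rfl fun i _ => by simp [Pi.sub_apply]; ring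
    rw [e1, e3] at hp
    rw [e2, e4] at hm
    rw [abs_le] at hp hm ⊢
    constructor <;> nlinarith
  have part1 : ∀ u v : Fin n → ℝ, (supp u ∪ supp v).card ≤ s →
      |dotp u v - dotp (A.mulVec u) (A.mulVec v)| ≤ δ * nrm u * nrm v := by
    intro u v huv
    by_cases hu : nrm u = 0
    · have : u = 0 := nrm_eq_zero hu
      subst this
      simp [dotp, Matrix.mulVec_zero, hu]
    by_cases hv : nrm v = 0
    · have : v = 0 := nrm_eq_zero hv
      subst this
      simp [dotp, Matrix.mulVec_zero, hv]
    have hu' : 0 < nrm u := lt_of_le_of_ne (nrm_nonneg u) (Ne.symm hu)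
    have hv' : 0 < nrm v := lt_of_le_of_ne (nrm_nonneg v) (Ne.symm hv)
    -- apply core to scaled vectors
    have hsub : supp (nrm v • u) ∪ supp (nrm u • v) ⊆ supp u ∪ supp v :=
      Finset.union_subset_union (supp_smul _ _) (supp_smul _ _)
    have hc := core (nrm v • u) (nrm u • v)
      (le_trans (Finset.card_le_card hsub) huv)
    have hd1 : dotp (nrm v • u) (nrm u • v) = nrm v * nrm u * dotp u v := by
      rw [dotp, dotp, Finset.mul_sum]
      exact Finset.sum_congr rfl fun i _ => by simp [smul_eq_mul]; ring
    have hd2 : dotp (A.mulVec (nrm v • u)) (A.mulVec (nrm u • v))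
        = nrm v * nrm u * dotp (A.mulVec u) (A.mulVec v) := by
      rw [Matrix.mulVec_smul, Matrix.mulVec_smul, dotp, dotp, Finset.mul_sum]
      exact Finset.sum_congr rfl fun i _ => by simp [smul_eq_mul]; ring
    rw [hd1, hd2, ← mul_sub, abs_mul, nrm_smul, nrm_smul,
      abs_of_pos (mul_pos hv' hu')] at hc
    have key : nrm v * nrm u * |dotp u v - dotp (A.mulVec u) (A.mulVec v)|
        ≤ nrm v * nrm u * (δ * nrm u * nrm v) := by
      calc nrm v * nrm u * |dotp u v - dotp (A.mulVec u) (A.mulVec v)|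
          ≤ δ * ((|nrm v| * nrm u)^2 + (|nrm u| * nrm v)^2) / 2 := hc
        _ = nrm v * nrm u * (δ * nrm u * nrm v) := by
            rw [abs_of_pos hu', abs_of_pos hv']; ring
    exact le_of_mul_le_mul_left key (mul_pos hv' hu')
  refine ⟨part1, ?_⟩
  intro S hS w hw
  set r : Fin n → ℝ := restr (fun i => w i - Aᵀ.mulVec (A.mulVec w) i) S with hr
  have hsuppr : supp r ⊆ S := by
    intro i hi
    simp only [supp, Finset.mem_filter, Finset.mem_univ, true_and, hr, restr] at hi
    by_contra hc
    simp [hc] at hi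
  have hcard : (supp r ∪ supp w).card ≤ s :=
    le_trans (Finset.card_le_card (Finset.union_subset hsuppr hw)) hS
  have h1 := part1 r w hcard
  -- dotp r w - dotp (Ar) (Aw) = nrm r ^ 2
  have hkey : dotp r w - dotp (A.mulVec r) (A.mulVec w) = (nrm r)^2 := by
    have hAd : dotp r (Aᵀ.mulVec (A.mulVec w)) = dotp (A.mulVec r) (A.mulVec w) := by
      rw [dotp_eq_dotProduct, dotp_eq_dotProduct, Matrix.dotProduct_mulVec,
        Matrix.vecMul_transpose]
    rw [← hAd, ← dotp_self, dotp, dotp, dotp, ← Finset.sum_sub_distrib]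
    refine Finset.sum_congr rfl fun i _ => ?_
    by_cases hi : i ∈ S
    · simp only [hr, restr, if_pos hi]; ring
    · simp only [hr, restr, if_neg hi]; ring
  rw [hkey] at h1
  rw [abs_of_nonneg (sq_nonneg _)] at h1
  by_cases hrz : nrm r = 0
  · rw [hrz]; exact mul_nonneg hδ0 (nrm_nonneg w)
  · have hr' : 0 < nrm r := lt_of_le_of_ne (nrm_nonneg r) (Ne.symm hrz)
    have : nrm r * nrm r ≤ nrm r * (δ * nrm w) := by
      calc nrm r * nrm r = (nrm r)^2 := (sq (nrm r)).symm
        _ ≤ δ * nrm r * nrm w := h1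
        _ = nrm r * (δ * nrm w) := by ring
    exact le_of_mul_le_mul_left this hr'
end

section
/- Let b = Ax*, let x be a least-squares solution on a support I (i.e., supp(x) ⊆ I and Aᵀ(Ax − b) vanishes on every index in I), let MD = supp(x*)\I, and let η ≠ 0. Then ⟨(x*)_{MD}, (Aᵀ(Ax − b))_{MD}⟩ = −‖Ax − b‖². Consequently, for z = x − η Aᵀ(Ax − b) one has z_{MD} = −η (Aᵀ(Ax − b))_{MD} and f(x) = (1/(2η)) ⟨(x*)_{MD}, z_{MD}⟩. -/
open Finset Matrix

theorem stmt3 {m n : ℕ} (A : Matrix (Fin m) (Fin n) ℝ) (xstar x : Fin n → ℝ)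
    (b : Fin m → ℝ) (hb : b = A.mulVec xstar)
    (I : Finset (Fin n)) (hx : lsSol A b I x)
    (MD : Finset (Fin n)) (hMD : MD = supp xstar \ I)
    (η : ℝ) (hη : η ≠ 0)
    (z : Fin n → ℝ) (hz : z = fun i => x i - η * Aᵀ.mulVec (A.mulVec x - b) i) :
    dotp (restr xstar MD) (restr (Aᵀ.mulVec (A.mulVec x - b)) MD)
        = -(nrm (A.mulVec x - b))^2 ∧
    (∀ i ∈ MD, z i = -η * Aᵀ.mulVec (A.mulVec x - b) i) ∧
    obj A b x = (1/(2*η)) * dotp (restr xstar MD) (restr z MD) := by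
  obtain ⟨hsupp, hls⟩ := hx
  set g : Fin n → ℝ := Aᵀ.mulVec (A.mulVec x - b) with hg
  set r : Fin m → ℝ := A.mulVec x - b with hr
  have hxI : ∀ i, i ∉ I → x i = 0 := by
    intro i hi
    by_contra h
    exact hi (hsupp (by simp [supp, h]))
  -- main identity
  have key : dotp (restr xstar MD) (restr g MD) = -(nrm r)^2 := by
    have step1 : dotp (restr xstar MD) (restr g MD) = ∑ i, (xstar i - x i) * g i := by
      apply Finset.sum_congr rfl
      intro i _
      by_cases hi : i ∈ MD
      · have hiI : i ∉ I := by
          rw [hMD] at hi; exact (Finset.mem_sdiff.mp hi).2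
        simp [restr, hi, hxI i hiI]
      · simp only [restr, if_neg hi]
        by_cases hiI : i ∈ I
        · rw [hls i hiI]; ring
        · have : i ∉ supp xstar := by
            intro h
            exact hi (by rw [hMD]; exact Finset.mem_sdiff.mpr ⟨h, hiI⟩)
          have hxs : xstar i = 0 := by
            by_contra h; exact this (by simp [supp, h])
          rw [hxs, hxI i hiI]; ring
    have step2 : ∑ i, (xstar i - x i) * g i = ∑ j, (A.mulVec (fun i => xstar i - x i)) j * r j := by
      simp only [hg, Matrix.mulVec, dotProduct, Matrix.transpose_apply,
        Finset.mul_sum, Finset.sum_mul]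
      rw [Finset.sum_comm]
      apply Finset.sum_congr rfl; intro j _
      apply Finset.sum_congr rfl; intro i _
      ring
    have step3 : A.mulVec (fun i => xstar i - x i) = -r := by
      have : (fun i => xstar i - x i) = xstar - x := rfl
      rw [this, Matrix.mulVec_sub, hr, hb]
      ext j; simp
    rw [step1, step2, step3, nrm, Real.sq_sqrt (by positivity)]
    simp [Finset.sum_neg_distrib]
    apply Finset.sum_congr rfl; intro j _; ring
  have hnrm : (nrm r)^2 = ∑ i, (r i)^2 := by
    rw [nrm, Real.sq_sqrt]
    positivity
  refine ⟨key, ?_, ?_⟩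
  · intro i hi
    have hiI : i ∉ I := by rw [hMD] at hi; exact (Finset.mem_sdiff.mp hi).2
    rw [hz]; simp [hxI i hiI]
  · have hzd : dotp (restr xstar MD) (restr z MD) = -η * dotp (restr xstar MD) (restr g MD) := by
      rw [dotp, dotp, Finset.mul_sum]
      apply Finset.sum_congr rfl
      intro i _
      by_cases hi : i ∈ MD
      · have hiI : i ∉ I := by rw [hMD] at hi; exact (Finset.mem_sdiff.mp hi).2
        simp [restr, hi, hz, hxI i hiI]; ring
      · simp [restr, hi]
    rw [hzd, key, obj]
    field_simp
    ring
end

section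
/- Let x* ∈ ℝ^n be k-sparse, b = Ax*, and suppose A satisfies the RIP of order 2k with constant δ_{2k}. Let η > 0 satisfy δ_{2k} < 1 − 1/(2η). Let x be a least-squares solution on a support I with |I| ≤ k, set z = x − η Aᵀ(Ax − b), MD = supp(x*)\I (missed detections) and FA = I\supp(x*) (false alarms). If f(x) > 0, then 0 < 2(2η − 1/(1−δ_{2k})) f(x) ≤ ‖z_{MD}‖² − ‖x_{FA}‖². -/
open Finset Matrix

lemma dotp_trans {m n : ℕ} (A : Matrix (Fin m) (Fin n) ℝ) (v : Fin m → ℝ) (w : Fin n → ℝ) :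
    dotp (Aᵀ.mulVec v) w = dotp v (A.mulVec w) := by
  show dotProduct (Aᵀ.mulVec v) w = dotProduct v (A.mulVec w)
  rw [Matrix.mulVec_transpose, Matrix.dotProduct_mulVec]

theorem stmt4 {m n k : ℕ} (A : Matrix (Fin m) (Fin n) ℝ) (xstar : Fin n → ℝ)
    (hsp : (supp xstar).card ≤ k) (b : Fin m → ℝ) (hb : b = A.mulVec xstar)
    (δ : ℝ) (hRIP : RIP A (2*k) δ)
    (η : ℝ) (hη : 0 < η) (hδη : δ < 1 - 1/(2*η))
    (x : Fin n → ℝ) (I : Finset (Fin n)) (hI : I.card ≤ k) (hx : lsSol A b I x)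
    (z : Fin n → ℝ) (hz : z = fun i => x i - η * Aᵀ.mulVec (A.mulVec x - b) i)
    (MD FA : Finset (Fin n)) (hMD : MD = supp xstar \ I) (hFA : FA = I \ supp xstar)
    (hf : 0 < obj A b x) :
    0 < 2*(2*η - 1/(1-δ)) * obj A b x ∧
    2*(2*η - 1/(1-δ)) * obj A b x ≤ (nrm (restr z MD))^2 - (nrm (restr x FA))^2 := by
  obtain ⟨hδ0, hδ1, hrip⟩ := hRIP
  obtain ⟨hsupp, hls⟩ := hx
  set r : Fin m → ℝ := A.mulVec x - b with hr
  set g : Fin n → ℝ := Aᵀ.mulVec r with hg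
  set u : Fin n → ℝ := x - xstar with hu
  have hδ1' : (0:ℝ) < 1 - δ := by linarith
  have hc : 1/(1-δ) < 2*η := by
    rw [div_lt_iff₀ hδ1']
    have h2η : (0:ℝ) < 2*η := by linarith
    have : 1/(2*η) < 1 - δ := by linarith
    rw [div_lt_iff₀ h2η] at this
    linarith
  have hxI : ∀ i, i ∉ I → x i = 0 := by
    intro i hi
    by_contra h
    exact hi (hsupp (by simp [supp, h]))
  have hxsI : ∀ i, i ∉ supp xstar → xstar i = 0 := by
    intro i hi
    by_contra h
    exact hi (by simp [supp, h])
  have hAu : A.mulVec u = r := by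
    rw [hu, Matrix.mulVec_sub, hr, hb]
  have h2f : 2 * obj A b x = dotp r r := by
    rw [obj, nrm_sq, dotp]
    rw [show (2:ℝ)*(1/2*∑ i, ((A.mulVec x - b) i)^2) = ∑ i, ((A.mulVec x - b) i)^2 by ring]
    exact Finset.sum_congr rfl fun i _ => pow_two _
  have hgu : dotp g u = 2 * obj A b x := by
    rw [hg, dotp_trans, hAu, h2f]
  -- pointwise identity
  have hpt : ∀ i, g i * u i = restr g MD i * (- restr xstar MD i) := by
    intro i
    by_cases hiI : i ∈ I
    · have h1 : g i = 0 := hls i hiI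
      have hiMD : i ∉ MD := by simp [hMD, hiI]
      simp [restr, hiMD, h1]
    · by_cases his : i ∈ supp xstar
      · have hiMD : i ∈ MD := by simp [hMD, his, hiI]
        have hui : u i = - xstar i := by simp [hu, Pi.sub_apply, hxI i hiI]
        simp only [restr, if_pos hiMD, hui]
      · have hiMD : i ∉ MD := by simp [hMD, his]
        have hui : u i = 0 := by simp [hu, Pi.sub_apply, hxI i hiI, hxsI i his]
        simp [restr, hiMD, hui]
  have hgu' : (2:ℝ) * obj A b x = ∑ i, restr g MD i * (- restr xstar MD i) := by
    rw [← hgu, dotp]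
    exact Finset.sum_congr rfl (fun i _ => hpt i)
  -- z on MD equals -η g on MD
  have hzMD : ∀ i, restr z MD i = -η * restr g MD i := by
    intro i
    by_cases hiMD : i ∈ MD
    · have hiI : i ∉ I := by rw [hMD] at hiMD; exact (Finset.mem_sdiff.mp hiMD).2
      simp only [restr, if_pos hiMD, hz, hxI i hiI]
      ring
    · simp [restr, hiMD]
  -- cross term
  have hcross : ∑ i, restr z MD i * restr xstar MD i = 2 * η * obj A b x := by
    have : ∀ i, restr z MD i * restr xstar MD i = η * (restr g MD i * (- restr xstar MD i)) := by
      intro i; rw [hzMD i]; ring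
    rw [Finset.sum_congr rfl (fun i _ => this i), ← Finset.mul_sum, ← hgu']
    ring
  -- AM-GM
  have hAM : 4 * η * obj A b x ≤ (nrm (restr z MD))^2 + (nrm (restr xstar MD))^2 := by
    have h0 : (0:ℝ) ≤ ∑ i, (restr z MD i - restr xstar MD i)^2 :=
      Finset.sum_nonneg (fun i _ => sq_nonneg _)
    have hexp : ∑ i, (restr z MD i - restr xstar MD i)^2
        = (nrm (restr z MD))^2 - 2 * (∑ i, restr z MD i * restr xstar MD i)
          + (nrm (restr xstar MD))^2 := by
      rw [nrm_sq, nrm_sq, Finset.mul_sum, ← Finset.sum_sub_distrib, ← Finset.sum_add_distrib]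
      exact Finset.sum_congr rfl fun i _ => by ring
    rw [hexp, hcross] at h0
    linarith
  -- sparsity of u
  have hu2k : (supp u).card ≤ 2 * k := by
    have hsub : supp u ⊆ I ∪ supp xstar := by
      intro i hi
      simp only [supp, Finset.mem_filter, Finset.mem_univ, true_and] at hi
      by_contra hcon
      simp only [Finset.mem_union, not_or] at hcon
      exact hi (by simp [hu, Pi.sub_apply, hxI i hcon.1, hxsI i hcon.2])
    calc (supp u).card ≤ (I ∪ supp xstar).card := Finset.card_le_card hsub
      _ ≤ I.card + (supp xstar).card := Finset.card_union_le _ _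
      _ ≤ 2 * k := by omega
  -- RIP bound
  have hRu : (1 - δ) * (nrm u)^2 ≤ 2 * obj A b x := by
    have := (hrip u hu2k).1
    rwa [hAu, show (nrm r)^2 = 2 * obj A b x by
      rw [h2f, nrm_sq, dotp]; exact Finset.sum_congr rfl fun i _ => pow_two _] at this
  -- norms on MD and FA bounded by norm of u
  have hsum : (nrm (restr xstar MD))^2 + (nrm (restr x FA))^2 ≤ (nrm u)^2 := by
    rw [nrm_sq, nrm_sq, nrm_sq, ← Finset.sum_add_distrib]
    refine Finset.sum_le_sum fun i _ => ?_
    by_cases hiI : i ∈ I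
    · have hiMD : i ∉ MD := by simp [hMD, hiI]
      by_cases his : i ∈ supp xstar
      · have hiFA : i ∉ FA := by simp [hFA, his]
        simp only [restr, if_neg hiMD, if_neg hiFA]
        simpa using sq_nonneg (u i)
      · have hiFA : i ∈ FA := by simp [hFA, hiI, his]
        have hui : u i = x i := by simp [hu, Pi.sub_apply, hxsI i his]
        simp only [restr, if_neg hiMD, if_pos hiFA, hui]
        norm_num
    · have hiFA : i ∉ FA := by simp [hFA, hiI]
      by_cases his : i ∈ supp xstar
      · have hiMD : i ∈ MD := by simp [hMD, his, hiI]
        have hui : u i = - xstar i := by simp [hu, Pi.sub_apply, hxI i hiI]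
        simp only [restr, if_pos hiMD, if_neg hiFA, hui]
        norm_num
      · have hiMD : i ∉ MD := by simp [hMD, his]
        simp only [restr, if_neg hiMD, if_neg hiFA]
        simpa using sq_nonneg (u i)
  -- combine
  have hudiv : (nrm u)^2 ≤ 2 * obj A b x / (1 - δ) := by
    rw [le_div_iff₀ hδ1']
    linarith [hRu]
  have hkey : 2*(2*η - 1/(1-δ)) * obj A b x = 4*η*obj A b x - 2*obj A b x/(1-δ) := by
    field_simp
    ring
  constructor
  · exact mul_pos (by linarith) hf
  · rw [hkey]
    linarith [hAM, hsum, hudiv]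
end

section
/- Let x* ∈ ℝ^n be k-sparse, b = Ax*, and suppose A satisfies the RIP of order 2k with constant δ_{2k}. Let 1/2 < η < 1 satisfy δ_{2k} < 1 − 1/(2η). Let x be a least-squares solution on a support I with |I| ≤ k, set z = x − η Aᵀ(Ax − b) and MD = supp(x*)\I. Then ((1−η)²/η)‖(x*)_{MD}‖² ≤ f(x) ≤ (1/(4η(1−η)²))‖z_{MD}‖². -/
open Finset Matrix

lemma aux_lower (η δ X W R : ℝ) (hη1 : 1/2 < η) (hη2 : η < 1)
    (hkey : 2*(1-η)^2 ≤ η*(1-δ)) (hX0 : 0 ≤ X) (hW0 : 0 ≤ W)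
    (hXW : X ≤ W) (hRW : (1-δ)*W ≤ R) :
    ((1-η)^2/η) * X ≤ 1/2 * R := by
  have hη0 : (0:ℝ) < η := by linarith
  rw [div_mul_eq_mul_div, div_le_iff₀ hη0]
  nlinarith [mul_le_mul_of_nonneg_right hkey hW0,
    mul_le_mul_of_nonneg_left hXW (sq_nonneg (1-η)),
    mul_le_mul_of_nonneg_left hRW hη0.le]

lemma aux_upper (η δ G W R : ℝ) (hη1 : 1/2 < η) (hη2 : η < 1)
    (hkey : 2*(1-η)^2 ≤ η*(1-δ)) (hδ1 : δ < 1) (hG0 : 0 ≤ G) (hW0 : 0 ≤ W)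
    (hR0 : 0 ≤ R) (hRW : (1-δ)*W ≤ R) (hCS : R^2 ≤ G*W) :
    1/2 * R ≤ 1/(4*η*(1-η)^2) * (η^2 * G) := by
  have hη0 : (0:ℝ) < η := by linarith
  have hden : (0:ℝ) < 4*η*(1-η)^2 := mul_pos (by linarith) (pow_pos (by linarith) 2)
  rw [show (1:ℝ)/(4*η*(1-η)^2) * (η^2*G) = (η^2*G)/(4*η*(1-η)^2) from by ring,
    le_div_iff₀ hden]
  rcases eq_or_lt_of_le hR0 with hReq | hRpos
  · rw [← hReq]
    nlinarith [mul_nonneg (sq_nonneg η) hG0]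
  · have h3 : (1-δ) * R ≤ G := by
      nlinarith [mul_le_mul_of_nonneg_left hCS (by linarith : (0:ℝ) ≤ 1-δ),
        mul_le_mul_of_nonneg_left hRW hG0]
    nlinarith [mul_le_mul_of_nonneg_right hkey (mul_nonneg hη0.le hR0),
      mul_le_mul_of_nonneg_left h3 (sq_nonneg η)]

theorem stmt5 {m n k : ℕ} (A : Matrix (Fin m) (Fin n) ℝ) (xstar : Fin n → ℝ)
    (hsp : (supp xstar).card ≤ k) (b : Fin m → ℝ) (hb : b = A.mulVec xstar)
    (δ : ℝ) (hRIP : RIP A (2*k) δ)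
    (η : ℝ) (hη1 : 1/2 < η) (hη2 : η < 1) (hδη : δ < 1 - 1/(2*η))
    (x : Fin n → ℝ) (I : Finset (Fin n)) (hI : I.card ≤ k) (hx : lsSol A b I x)
    (z : Fin n → ℝ) (hz : z = fun i => x i - η * Aᵀ.mulVec (A.mulVec x - b) i)
    (MD : Finset (Fin n)) (hMD : MD = supp xstar \ I) :
    ((1-η)^2/η) * (nrm (restr xstar MD))^2 ≤ obj A b x ∧
    obj A b x ≤ (1/(4*η*(1-η)^2)) * (nrm (restr z MD))^2 := by
  have hη0 : (0:ℝ) < η := by linarith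
  set r : Fin m → ℝ := A.mulVec x - b with hr
  set g : Fin n → ℝ := Aᵀ.mulVec r with hg
  set w : Fin n → ℝ := fun i => x i - xstar i with hw
  -- x vanishes off I
  have hx0 : ∀ i, i ∉ I → x i = 0 := by
    intro i hi
    by_contra h
    exact hi (hx.1 (by simp [supp, h]))
  -- A w = r
  have hAw : A.mulVec w = r := by
    funext j
    simp only [hr, hb, hw, Matrix.mulVec, dotProduct, Pi.sub_apply, mul_sub,
      Finset.sum_sub_distrib]
  -- support of w
  have hcard : (supp w).card ≤ 2 * k := by
    have hsub : supp w ⊆ I ∪ supp xstar := by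
      intro i hi
      simp only [supp, Finset.mem_filter, Finset.mem_univ, true_and] at hi
      rcases eq_or_ne (x i) 0 with h0 | h0
      · have : xstar i ≠ 0 := by
          intro h1; apply hi; simp [hw, h0, h1]
        exact Finset.mem_union_right _ (by simp [supp, this])
      · exact Finset.mem_union_left _ (hx.1 (by simp [supp, h0]))
    calc (supp w).card ≤ (I ∪ supp xstar).card := Finset.card_le_card hsub
      _ ≤ I.card + (supp xstar).card := Finset.card_union_le _ _
      _ ≤ 2 * k := by omega
  -- abbreviations for sums
  set R : ℝ := ∑ j, (r j)^2 with hR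
  set W : ℝ := ∑ i, (w i)^2 with hW
  set G : ℝ := ∑ i ∈ MD, (g i)^2 with hG
  set X : ℝ := ∑ i ∈ MD, (xstar i)^2 with hX
  have hR0 : 0 ≤ R := Finset.sum_nonneg fun i _ => sq_nonneg _
  have hW0 : 0 ≤ W := Finset.sum_nonneg fun i _ => sq_nonneg _
  have hG0 : 0 ≤ G := Finset.sum_nonneg fun i _ => sq_nonneg _
  have hX0 : 0 ≤ X := Finset.sum_nonneg fun i _ => sq_nonneg _
  -- RIP lower bound
  have hRW : (1 - δ) * W ≤ R := by
    have := (hRIP.2.2 w hcard).1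
    rw [nrm_sq, nrm_sq, hAw] at this
    exact this
  -- ⟨g, w⟩ = R
  have hgw : ∑ i, g i * w i = R := by
    have h1 : ∑ i, g i * w i = ∑ j, r j * (A.mulVec w j) := by
      simp only [hg, Matrix.mulVec, dotProduct, Matrix.transpose_apply, Finset.sum_mul,
        Finset.mul_sum]
      rw [Finset.sum_comm]
      exact Finset.sum_congr rfl fun j _ => Finset.sum_congr rfl fun i _ => by ring
    rw [h1, hAw, hR]
    exact Finset.sum_congr rfl fun j _ => by ring
  -- restriction of inner product to MD
  have hsplit : ∑ i ∈ MD, g i * w i = ∑ i, g i * w i := by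
    apply Finset.sum_subset (Finset.subset_univ MD)
    intro i _ hiMD
    by_cases hiI : i ∈ I
    · have := hx.2 i hiI
      rw [← hr, ← hg] at this
      rw [this, zero_mul]
    · have hxi : x i = 0 := hx0 i hiI
      have hxs : xstar i = 0 := by
        by_contra h
        exact hiMD (by rw [hMD]; simp [supp, h, hiI])
      simp [hw, hxi, hxs]
  -- w = -xstar on MD
  have hwMD : ∀ i ∈ MD, w i = -xstar i := by
    intro i hi
    rw [hMD, Finset.mem_sdiff] at hi
    have : x i = 0 := hx0 i hi.2
    simp [hw, this]
  -- X = ∑_{MD} w^2 ≤ W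
  have hXW : X ≤ W := by
    have h1 : X = ∑ i ∈ MD, (w i)^2 := by
      apply Finset.sum_congr rfl
      intro i hi; rw [hwMD i hi]; ring
    rw [h1, hW]
    exact Finset.sum_le_sum_of_subset_of_nonneg (Finset.subset_univ MD)
      (fun i _ _ => sq_nonneg _)
  -- Cauchy-Schwarz: R^2 ≤ G * W
  have hCS : R^2 ≤ G * W := by
    have h1 : (∑ i ∈ MD, g i * w i)^2 ≤ G * ∑ i ∈ MD, (w i)^2 :=
      Finset.sum_mul_sq_le_sq_mul_sq MD g w
    have h2 : ∑ i ∈ MD, (w i)^2 ≤ W :=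
      Finset.sum_le_sum_of_subset_of_nonneg (Finset.subset_univ MD)
        (fun i _ _ => sq_nonneg _)
    calc R^2 = (∑ i ∈ MD, g i * w i)^2 := by rw [hsplit, hgw]
      _ ≤ G * ∑ i ∈ MD, (w i)^2 := h1
      _ ≤ G * W := by nlinarith
  -- norms of restrictions
  have hnX : (nrm (restr xstar MD))^2 = X := by
    rw [nrm_sq, hX]
    rw [← Finset.sum_subset (Finset.subset_univ MD)]
    · exact Finset.sum_congr rfl fun i hi => by simp [restr, hi]
    · intro i _ hi; simp [restr, hi]
  have hnZ : (nrm (restr z MD))^2 = η^2 * G := by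
    rw [nrm_sq, hG, Finset.mul_sum]
    rw [← Finset.sum_subset (Finset.subset_univ MD)]
    · apply Finset.sum_congr rfl
      intro i hi
      have hiI : i ∉ I := by
        rw [hMD, Finset.mem_sdiff] at hi; exact hi.2
      have hxi : x i = 0 := hx0 i hiI
      have hzi : z i = -η * g i := by
        rw [hz]; simp only [hg, hr]; rw [hxi]; ring
      simp [restr, hi, hzi]; ring
    · intro i _ hi; simp [restr, hi]
  -- objective
  have hobj : obj A b x = (1/2) * R := by
    rw [obj, ← hr, nrm_sq, hR]
  -- key constant inequality
  have hkey : 2 * (1-η)^2 ≤ η * (1-δ) := by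
    have h1 : 1/2 < η * (1-δ) := by
      have h2 : 1/(2*η) < 1 - δ := by linarith
      have h3 : η * (1/(2*η)) < η * (1-δ) := mul_lt_mul_of_pos_left h2 hη0
      have h4 : η * (1/(2*η)) = 1/2 := by field_simp
      linarith
    nlinarith [mul_pos (by linarith : (0:ℝ) < η - 1/2) (by linarith : (0:ℝ) < 3/2 - η)]
  clear_value R W G X g r w
  rw [hobj, hnX, hnZ]
  constructor
  · exact aux_lower η δ X W R hη1 hη2 hkey hX0 hW0 hXW hRW
  · exact aux_upper η δ G W R hη1 hη2 hkey hRIP.2.1 hG0 hW0 hR0 hRW hCS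
end

section
/- Let b ∈ ℝ^m and η > 0, and suppose A satisfies the upper RIP inequality of order 2l with constant δ_{2l}, i.e., ‖Au‖² ≤ (1+δ_{2l})‖u‖² for every 2l-sparse u ∈ ℝ^n. Let x be a least-squares solution on a support I. Let N ⊆ {1,…,n}, put F = N\I (found set) and L = I\N (lost set), and assume |F| + |L| ≤ 2l. Let y ∈ ℝ^n be supported on N with y_j = x_j for j ∈ N ∩ I and y_j = −η (Aᵀ(Ax − b))_j for j ∈ F, and assume ‖y_F‖² ≥ ‖x_L‖². Then f(y) − f(x) ≤ (1 + δ_{2l} − 1/η)‖y_F‖². -/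
open Finset Matrix

theorem stmt7 {m n l : ℕ} (A : Matrix (Fin m) (Fin n) ℝ) (b : Fin m → ℝ)
    (η δ : ℝ) (hη : 0 < η)
    (hUpper : ∀ u : Fin n → ℝ, (supp u).card ≤ 2*l →
      (nrm (A.mulVec u))^2 ≤ (1+δ) * (nrm u)^2)
    (x : Fin n → ℝ) (I : Finset (Fin n)) (hx : lsSol A b I x)
    (N F L : Finset (Fin n)) (hF : F = N \ I) (hL : L = I \ N)
    (hcard : F.card + L.card ≤ 2*l)
    (y : Fin n → ℝ) (hysupp : supp y ⊆ N)
    (hyI : ∀ j ∈ N ∩ I, y j = x j)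
    (hyF : ∀ j ∈ F, y j = -η * Aᵀ.mulVec (A.mulVec x - b) j)
    (hFL : (nrm (restr x L))^2 ≤ (nrm (restr y F))^2) :
    obj A b y - obj A b x ≤ (1 + δ - 1/η) * (nrm (restr y F))^2 := by
  obtain ⟨hxsupp, hxls⟩ := hx
  set g : Fin n → ℝ := Aᵀ.mulVec (A.mulVec x - b) with hg
  set u : Fin n → ℝ := fun j => y j - x j with hu
  have hx0 : ∀ j, j ∉ I → x j = 0 := by
    intro j hj
    by_contra h
    exact hj (hxsupp (by simp [supp, h]))
  have hy0 : ∀ j, j ∉ N → y j = 0 := by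
    intro j hj
    by_contra h
    exact hj (hysupp (by simp [supp, h]))
  -- pointwise square identity
  have hsq : ∀ j, (u j)^2 = (restr y F j)^2 + (restr x L j)^2 := by
    intro j
    by_cases hjN : j ∈ N <;> by_cases hjI : j ∈ I
    · have h := hyI j (Finset.mem_inter.mpr ⟨hjN, hjI⟩)
      simp only [hu, restr, hF, hL, Finset.mem_sdiff, hjN, hjI, h]
      simp
    · simp only [hu, restr, hF, hL, Finset.mem_sdiff, hjN, hjI, hx0 j hjI]
      simp
    · simp only [hu, restr, hF, hL, Finset.mem_sdiff, hjN, hjI, hy0 j hjN]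
      simp [neg_sq]
    · simp only [hu, restr, hF, hL, Finset.mem_sdiff, hjN, hjI, hx0 j hjI, hy0 j hjN]
      simp
  -- pointwise product identity
  have hug : ∀ j, u j * g j = -(1/η) * (restr y F j)^2 := by
    intro j
    by_cases hjN : j ∈ N <;> by_cases hjI : j ∈ I
    · have h := hyI j (Finset.mem_inter.mpr ⟨hjN, hjI⟩)
      simp only [hu, restr, hF, Finset.mem_sdiff, hjN, hjI, h]
      simp
    · have hjF : j ∈ F := by rw [hF]; exact Finset.mem_sdiff.mpr ⟨hjN, hjI⟩
      have hyj := hyF j hjF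
      have hxj := hx0 j hjI
      simp only [hu, restr, hjF, if_true, hxj, sub_zero]
      rw [hyj]
      field_simp
    · have hgj : g j = 0 := hxls j hjI
      have hjF : j ∉ F := by rw [hF]; simp [hjN]
      simp [restr, hjF, hgj]
    · have hjF : j ∉ F := by rw [hF]; simp [Finset.mem_sdiff, hjN]
      simp [hu, restr, hjF, hx0 j hjI, hy0 j hjN]
  -- sparsity of u
  have hsupp_u : supp u ⊆ F ∪ L := by
    intro j hj
    simp only [supp, Finset.mem_filter] at hj
    by_contra hjFL
    simp only [Finset.mem_union, not_or] at hjFL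
    obtain ⟨hjF, hjL⟩ := hjFL
    apply hj.2
    by_cases hjN : j ∈ N <;> by_cases hjI : j ∈ I
    · have h := hyI j (Finset.mem_inter.mpr ⟨hjN, hjI⟩)
      simp [hu, h]
    · exact absurd (by rw [hF]; exact Finset.mem_sdiff.mpr ⟨hjN, hjI⟩) hjF
    · exact absurd (by rw [hL]; exact Finset.mem_sdiff.mpr ⟨hjI, hjN⟩) hjL
    · simp [hu, hx0 j hjI, hy0 j hjN]
  have hsparse : (supp u).card ≤ 2*l :=
    le_trans (le_trans (Finset.card_le_card hsupp_u) (Finset.card_union_le F L)) hcard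
  have hAu := hUpper u hsparse
  -- abbreviations
  set SF : ℝ := (nrm (restr y F))^2 with hSF
  set SL : ℝ := (nrm (restr x L))^2 with hSL
  have hSFnn : 0 ≤ SF := by rw [hSF]; positivity
  have hSLnn : 0 ≤ SL := by rw [hSL]; positivity
  have hnu : (nrm u)^2 = SF + SL := by
    rw [nrm_sq, hSF, hSL, nrm_sq, nrm_sq, ← Finset.sum_add_distrib]
    exact Finset.sum_congr rfl (fun j _ => hsq j)
  -- dot product computation
  have hdot : ∑ i, A.mulVec u i * (A.mulVec x - b) i = -(1/η) * SF := by
    have h1 : ∑ i, A.mulVec u i * (A.mulVec x - b) i = ∑ j, u j * g j := by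
      have : (A.mulVec u) ⬝ᵥ (A.mulVec x - b) = u ⬝ᵥ g := by
        rw [hg, Matrix.dotProduct_mulVec, Matrix.vecMul_transpose]
      simpa [dotProduct] using this
    rw [h1, hSF, nrm_sq, Finset.mul_sum]
    exact Finset.sum_congr rfl (fun j _ => by rw [hug j])
  -- key identity
  have hobj : obj A b y - obj A b x =
      (1/2) * (nrm (A.mulVec u))^2 + ∑ i, A.mulVec u i * (A.mulVec x - b) i := by
    have hyux : y = x + u := by funext j; simp [hu]
    have hAy : A.mulVec y - b = A.mulVec u + (A.mulVec x - b) := by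
      rw [hyux, Matrix.mulVec_add]
      funext i; simp; ring
    rw [obj, obj, hAy, nrm_sq, nrm_sq, nrm_sq]
    have : ∑ i, ((A.mulVec u + (A.mulVec x - b)) i)^2 =
        ∑ i, ((A.mulVec u i)^2 + 2 * (A.mulVec u i * (A.mulVec x - b) i) + ((A.mulVec x - b) i)^2) := by
      exact Finset.sum_congr rfl (fun i _ => by simp [Pi.add_apply]; ring)
    rw [this, Finset.sum_add_distrib, Finset.sum_add_distrib, ← Finset.mul_sum]
    ring
  rw [hobj, hdot]
  rw [hnu] at hAu
  -- 1 + δ ≥ 0 or degenerate case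
  rcases eq_or_lt_of_le (by positivity : (0:ℝ) ≤ SF + SL) with hzero | hpos
  · -- SF + SL = 0, so SF = 0 and nrm u = 0, so A.mulVec u small
    have hSF0 : SF = 0 := by linarith
    have hSL0 : SL = 0 := by linarith
    have hu0 : u = 0 := by
      funext j
      have hj : (u j)^2 = 0 := by
        have hsum : ∑ j, (u j)^2 = 0 := by
          have := hnu; rw [nrm_sq] at this; linarith
        have := Finset.sum_eq_zero_iff_of_nonneg
          (fun j _ => sq_nonneg (u j)) |>.mp hsum j (Finset.mem_univ j)
        exact this
      exact pow_eq_zero_iff (by norm_num) |>.mp hj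
    have : A.mulVec u = 0 := by rw [hu0, Matrix.mulVec_zero]
    rw [this, hSF0]
    simp [nrm]
  · have h1δ : 0 ≤ 1 + δ := by
      by_contra h
      push_neg at h
      have h2 : (0:ℝ) ≤ (nrm (A.mulVec u))^2 := sq_nonneg _
      nlinarith
    have hstep : (nrm (A.mulVec u))^2 ≤ (1+δ) * (SF + SF) := by
      calc (nrm (A.mulVec u))^2 ≤ (1+δ) * (SF + SL) := hAu
        _ ≤ (1+δ) * (SF + SF) := by
            apply mul_le_mul_of_nonneg_left _ h1δ
            linarith
    nlinarith
end

section
/- Let b = Ax* + e for some noise vector e ∈ ℝ^m, let x be a least-squares solution on a support I, let MD = supp(x*)\I, let η ≠ 0, and set z = x − η Aᵀ(Ax − b). Then f(x) = (1/(2η)) ⟨(x*)_{MD}, z_{MD}⟩ − (1/2) ⟨e, Ax − b⟩. -/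
open Finset Matrix

lemma dotp_transpose {m n : ℕ} (A : Matrix (Fin m) (Fin n) ℝ) (u : Fin n → ℝ) (v : Fin m → ℝ) :
    dotp u (Aᵀ.mulVec v) = dotp (A.mulVec u) v := by
  simp only [dotp, Matrix.mulVec, dotProduct, Matrix.transpose_apply, Finset.mul_sum,
    Finset.sum_mul]
  rw [Finset.sum_comm]
  apply Finset.sum_congr rfl; intro i _
  apply Finset.sum_congr rfl; intro j _
  ring

theorem stmt9 {m n : ℕ} (A : Matrix (Fin m) (Fin n) ℝ) (xstar x : Fin n → ℝ)
    (e b : Fin m → ℝ) (hb : b = A.mulVec xstar + e)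
    (I : Finset (Fin n)) (hx : lsSol A b I x)
    (MD : Finset (Fin n)) (hMD : MD = supp xstar \ I)
    (η : ℝ) (hη : η ≠ 0)
    (z : Fin n → ℝ) (hz : z = fun i => x i - η * Aᵀ.mulVec (A.mulVec x - b) i) :
    obj A b x = (1/(2*η)) * dotp (restr xstar MD) (restr z MD)
        - (1/2) * dotp e (A.mulVec x - b) := by

  obtain ⟨hsupp, hls⟩ := hx
  set r : Fin m → ℝ := A.mulVec x - b with hr
  set g : Fin n → ℝ := Aᵀ.mulVec r with hg
  have hx0 : ∀ i, i ∉ I → x i = 0 := by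
    intro i hi
    by_contra h
    exact hi (hsupp (by simp [supp, h]))
  have hA : dotp (restr xstar MD) (restr z MD) = -η * dotp xstar g := by
    simp only [dotp, Finset.mul_sum]
    apply Finset.sum_congr rfl
    intro i _
    by_cases hiMD : i ∈ MD
    · have hiI : i ∉ I := by rw [hMD] at hiMD; exact (Finset.mem_sdiff.mp hiMD).2
      have : z i = -η * g i := by
        rw [hz]; simp [hx0 i hiI, hg, hr]
      simp [restr, hiMD, this]; ring
    · by_cases hs : xstar i = 0
      · simp [restr, hiMD, hs]
      · have hiI : i ∈ I := by
          by_contra hni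
          exact hiMD (hMD ▸ Finset.mem_sdiff.mpr ⟨by simp [supp, hs], hni⟩)
        have : g i = 0 := hls i hiI
        simp [restr, hiMD, this]
  have hxg : dotp x g = 0 := by
    simp only [dotp]
    apply Finset.sum_eq_zero
    intro i _
    by_cases hxi : x i = 0
    · simp [hxi]
    · have := hls i (hsupp (by simp [supp, hxi]))
      rw [mul_eq_zero]; exact Or.inr this
  have hAx : dotp (A.mulVec x) r = 0 := by rw [← dotp_transpose]; exact hxg
  have hstar : dotp xstar g = - dotp r r - dotp e r := by
    rw [dotp_transpose]
    have hAxstar : A.mulVec xstar = b - e := by rw [hb]; abel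
    have hb' : b = A.mulVec x - r := by rw [hr]; abel
    rw [hAxstar, hb']
    have expand : ∀ i, (A.mulVec x - r - e) i * r i
        = (A.mulVec x) i * r i - r i * r i - e i * r i := by
      intro i; simp [Pi.sub_apply]; ring
    simp only [dotp]
    rw [Finset.sum_congr rfl (fun i _ => expand i)]
    rw [Finset.sum_sub_distrib, Finset.sum_sub_distrib]
    have := hAx
    simp only [dotp] at this
    rw [this]; ring
  have hobj : obj A b x = (1/2) * dotp r r := by
    simp only [obj, nrm, dotp, hr]
    rw [Real.sq_sqrt (Finset.sum_nonneg fun i _ => sq_nonneg _)]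
    congr 1
    exact Finset.sum_congr rfl fun i _ => pow_two _
  rw [hobj, hA, hstar]
  field_simp
  ring
end

section
/- (One iteration of OMPR(l), noisy case.) Let x* ∈ ℝ^n be k-sparse, e ∈ ℝ^m, and b = Ax* + e. Suppose A satisfies the RIP of order 2k with constant δ_{2k} and of order 2l with constant δ_{2l}. Let C > 1, set D = (C − √C)/(√C + 1)², and let η > 0 satisfy η(1+δ_{2l}) < 1 and δ_{2k} < 1 − 1/(2Dη). Let x^t be a least-squares solution on a support I_t with |I_t| = k, and assume f(x^t) ≥ (C/2)‖e‖². Set z = x^t − η Aᵀ(Ax^t − b). Let 1 ≤ l ≤ k, let L ⊆ I_tᶜ with |L| = l satisfy |z_j| ≥ |z_{j'}| for all j ∈ L, j' ∈ I_tᶜ\L, let S ⊆ I_t ∪ L with |S| = k satisfy |z_j| ≥ |z_{j'}| for all j ∈ S, j' ∈ (I_t ∪ L)\S, and let x^{t+1} be a least-squares solution on S. Then f(x^{t+1}) − f(x^t) ≤ −c' (l/k) f(x^t), where c' = α(1 − η(1+δ_{2l}))/(η(1+δ_{2l})) > 0 and α = min(4η(1−Dη)²(√C−1)²/(CD), 2((√C+1)²/C)(2ηD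 − 1/(1−δ_{2k}))). -/
open Finset Matrix

lemma dotp_mulVec {m n : ℕ} (A : Matrix (Fin m) (Fin n) ℝ) (v : Fin n → ℝ) (w : Fin m → ℝ) :
    dotp (A.mulVec v) w = dotp v (Aᵀ.mulVec w) := by
  simp only [dotp, Matrix.mulVec, dotProduct, Matrix.transpose_apply,
    Finset.sum_mul, Finset.mul_sum]
  rw [Finset.sum_comm]
  apply Finset.sum_congr rfl
  intro i _
  apply Finset.sum_congr rfl
  intro j _
  ring

lemma obj_expand {m n : ℕ} (A : Matrix (Fin m) (Fin n) ℝ) (b : Fin m → ℝ) (x y : Fin n → ℝ) :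
    obj A b y = obj A b x + dotp (Aᵀ.mulVec (A.mulVec x - b)) (y - x)
      + (1/2) * (nrm (A.mulVec (y - x)))^2 := by
  have key : A.mulVec y - b = (A.mulVec x - b) + A.mulVec (y - x) := by
    rw [Matrix.mulVec_sub]; abel
  have hd : dotp (Aᵀ.mulVec (A.mulVec x - b)) (y - x)
      = dotp (A.mulVec (y - x)) (A.mulVec x - b) := by
    rw [dotp_mulVec, Matrix.transpose_transpose]
    simp only [dotp]
    apply Finset.sum_congr rfl
    intro i _; ring
  rw [hd]
  simp only [obj, nrm_sq, key, dotp]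
  rw [Finset.mul_sum, Finset.mul_sum, Finset.mul_sum, ← Finset.sum_add_distrib, ← Finset.sum_add_distrib]
  apply Finset.sum_congr rfl
  intro j _
  simp only [Pi.add_apply, Pi.sub_apply]
  ring

lemma lsSol_min {m n : ℕ} (A : Matrix (Fin m) (Fin n) ℝ) (b : Fin m → ℝ) (S : Finset (Fin n))
    (x0 y : Fin n → ℝ) (h : lsSol A b S x0) (hy : supp y ⊆ S) :
    obj A b x0 ≤ obj A b y := by
  rw [obj_expand A b x0 y]
  have hdot : dotp (Aᵀ.mulVec (A.mulVec x0 - b)) (y - x0) = 0 := by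
    apply Finset.sum_eq_zero
    intro i _
    by_cases hi : i ∈ S
    · rw [h.2 i hi]; ring
    · have hyi : y i = 0 := by
        by_contra hne
        exact hi (hy (by simp [supp, hne]))
      have hxi : x0 i = 0 := by
        by_contra hne
        exact hi (h.1 (by simp [supp, hne]))
      simp [hyi, hxi]
  rw [hdot]
  have : 0 ≤ (nrm (A.mulVec (y - x0)))^2 := sq_nonneg _
  nlinarith

lemma exists_extreme {d : ℕ} (f : Fin d → ℝ) :
    ∀ (p : ℕ) (U : Finset (Fin d)), p ≤ U.card →
    ∃ V, V ⊆ U ∧ V.card = p ∧ ∀ a ∈ V, ∀ b ∈ U \ V, f b ≤ f a := by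
  intro p
  induction p with
  | zero => intro U _; exact ⟨∅, by simp⟩
  | succ q ih =>
    intro U hU
    have hne : U.Nonempty := Finset.card_pos.mp (by omega)
    obtain ⟨a0, ha0, hmax⟩ := U.exists_max_image f hne
    have hcard : q ≤ (U.erase a0).card := by
      rw [Finset.card_erase_of_mem ha0]; omega
    obtain ⟨V, hVsub, hVcard, hVtop⟩ := ih (U.erase a0) hcard
    have ha0V : a0 ∉ V := fun h => (Finset.mem_erase.mp (hVsub h)).1 rfl
    refine ⟨insert a0 V, ?_, ?_, ?_⟩
    · intro x hx
      rcases Finset.mem_insert.mp hx with h | h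
      · exact h ▸ ha0
      · exact Finset.mem_of_mem_erase (hVsub h)
    · rw [Finset.card_insert_of_notMem ha0V, hVcard]
    · intro a ha b hb
      have hbU : b ∈ U := (Finset.mem_sdiff.mp hb).1
      have hbn : b ∉ insert a0 V := (Finset.mem_sdiff.mp hb).2
      rcases Finset.mem_insert.mp ha with h | h
      · exact h ▸ hmax b hbU
      · apply hVtop a h
        rw [Finset.mem_sdiff]
        refine ⟨Finset.mem_erase.mpr ⟨?_, hbU⟩, fun hbV => hbn (Finset.mem_insert_of_mem hbV)⟩
        intro hba0; exact hbn (hba0 ▸ Finset.mem_insert_self a0 V)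

/-- each element of P is at most each element of R, |P| ≤ |R|, f nonneg ⇒ sum over P ≤ sum over R -/
lemma sum_cmp {d : ℕ} (f : Fin d → ℝ) (hf : ∀ i, 0 ≤ f i) (P R : Finset (Fin d))
    (hcmp : ∀ a ∈ P, ∀ b ∈ R, f a ≤ f b) (hcard : P.card ≤ R.card) :
    ∑ i ∈ P, f i ≤ ∑ i ∈ R, f i := by
  rcases P.eq_empty_or_nonempty with h | h
  · subst h; simpa using Finset.sum_nonneg (fun i _ => hf i)
  · have hRne : R.Nonempty := Finset.card_pos.mp (lt_of_lt_of_le (Finset.card_pos.mpr h) hcard)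
    obtain ⟨b0, hb0, hbmin⟩ := R.exists_min_image f hRne
    calc ∑ i ∈ P, f i ≤ ∑ _i ∈ P, f b0 := Finset.sum_le_sum (fun i hi => hcmp i hi b0 hb0)
    _ = P.card * f b0 := by rw [Finset.sum_const]; ring
    _ ≤ R.card * f b0 := by
        apply mul_le_mul_of_nonneg_right _ (hf b0)
        exact_mod_cast hcard
    _ = ∑ _i ∈ R, f b0 := by rw [Finset.sum_const]; ring
    _ ≤ ∑ i ∈ R, f i := Finset.sum_le_sum (fun i hi => hbmin i hi)

/-- top-set averaging: Λ is a "top" subset of U, Δ ⊆ U, |Λ| ≤ |Δ| ⇒ |Λ|·∑_Δ f ≤ |Δ|·∑_Λ f -/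
lemma avg_top {d : ℕ} (f : Fin d → ℝ) (hf : ∀ i, 0 ≤ f i) (Lam Del U : Finset (Fin d))
    (hLU : Lam ⊆ U) (hDU : Del ⊆ U) (htop : ∀ a ∈ Lam, ∀ b ∈ U \ Lam, f b ≤ f a)
    (hcard : Lam.card ≤ Del.card) :
    (Lam.card : ℝ) * ∑ i ∈ Del, f i ≤ (Del.card : ℝ) * ∑ i ∈ Lam, f i := by
  rcases Lam.eq_empty_or_nonempty with h | h
  · subst h
    simp only [Finset.card_empty, Nat.cast_zero, zero_mul, Finset.sum_empty, mul_zero]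
    positivity
  obtain ⟨j0, hj0, hmin⟩ := Lam.exists_min_image f h
  set m := f j0 with hm
  set c := (Del ∩ Lam).card with hc
  -- decompositions
  have hdec : ∑ i ∈ Del, f i = ∑ i ∈ Del ∩ Lam, f i + ∑ i ∈ Del \ Lam, f i := by
    rw [Finset.sum_inter_add_sum_sdiff]
  have hdec2 : ∑ i ∈ Lam, f i = ∑ i ∈ Lam ∩ Del, f i + ∑ i ∈ Lam \ Del, f i := by
    rw [Finset.sum_inter_add_sum_sdiff]
  have h1 : ∑ i ∈ Del \ Lam, f i ≤ ((Del.card : ℝ) - c) * m := by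
    have : ∀ i ∈ Del \ Lam, f i ≤ m :=
      fun i hi => htop j0 hj0 i (Finset.mem_sdiff.mpr ⟨hDU (Finset.mem_sdiff.mp hi).1, (Finset.mem_sdiff.mp hi).2⟩)
    calc ∑ i ∈ Del \ Lam, f i ≤ ∑ _i ∈ Del \ Lam, m := Finset.sum_le_sum this
    _ = ((Del \ Lam).card : ℝ) * m := by rw [Finset.sum_const]; ring
    _ = ((Del.card : ℝ) - c) * m := by
        congr 1
        rw [Finset.card_sdiff_add_card_inter Del Lam |>.symm]
        push_cast [hc]; ring
  have h2 : (c : ℝ) * m ≤ ∑ i ∈ Lam ∩ Del, f i := by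
    calc (c:ℝ) * m = ∑ _i ∈ Del ∩ Lam, m := by rw [Finset.sum_const, hc]; ring
    _ = ∑ _i ∈ Lam ∩ Del, m := by rw [Finset.inter_comm]
    _ ≤ ∑ i ∈ Lam ∩ Del, f i := Finset.sum_le_sum (fun i hi => hmin i (Finset.mem_of_mem_inter_left hi))
  have h3 : ((Lam.card : ℝ) - c) * m ≤ ∑ i ∈ Lam \ Del, f i := by
    calc ∑ i ∈ Lam \ Del, f i ≥ ∑ _i ∈ Lam \ Del, m :=
          Finset.sum_le_sum (fun i hi => hmin i (Finset.mem_sdiff.mp hi).1)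
    _ = ((Lam \ Del).card : ℝ) * m := by rw [Finset.sum_const]; ring
    _ = ((Lam.card : ℝ) - c) * m := by
        congr 1
        rw [Finset.card_sdiff_add_card_inter Lam Del |>.symm]
        push_cast [hc, Finset.inter_comm]; ring
  have hXm : (c : ℝ) * m ≤ ∑ i ∈ Del ∩ Lam, f i := by rw [Finset.inter_comm] at h2 ⊢; rwa [Finset.inter_comm]
  have hcc : (c : ℝ) ≤ Lam.card := by exact_mod_cast Finset.card_le_card (Finset.inter_subset_right)
  have hpd : (Lam.card : ℝ) ≤ Del.card := by exact_mod_cast hcard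
  have hm0 : 0 ≤ m := hf j0
  have hX0 : 0 ≤ ∑ i ∈ Del ∩ Lam, f i := Finset.sum_nonneg (fun i _ => hf i)
  have hXZ : ∑ i ∈ Del ∩ Lam, f i ≤ ∑ i ∈ Lam, f i := by
    rw [Finset.inter_comm]
    exact Finset.sum_le_sum_of_subset_of_nonneg Finset.inter_subset_left (fun i _ _ => hf i)
  have hXX : ∑ i ∈ Lam ∩ Del, f i = ∑ i ∈ Del ∩ Lam, f i := by rw [Finset.inter_comm]
  have hp0 : (0:ℝ) ≤ Lam.card := Nat.cast_nonneg _
  have hd0 : (0:ℝ) ≤ Del.card := Nat.cast_nonneg _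
  have k1 : (Lam.card:ℝ) * (∑ i ∈ Del \ Lam, f i) ≤ (Lam.card:ℝ) * (((Del.card : ℝ) - c) * m) :=
    mul_le_mul_of_nonneg_left h1 hp0
  have k2 : (Del.card:ℝ) * (((Lam.card : ℝ) - c) * m) ≤ (Del.card:ℝ) * (∑ i ∈ Lam \ Del, f i) :=
    mul_le_mul_of_nonneg_left h3 hd0
  have k3 : 0 ≤ ((Del.card:ℝ) - Lam.card) * ((∑ i ∈ Del ∩ Lam, f i) - c * m) :=
    mul_nonneg (sub_nonneg.mpr hpd) (sub_nonneg.mpr hXm)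
  nlinarith [k1, k2, k3]

lemma core_poly (w e1 p q : ℝ) (hw : 1 < w) (he1 : 0 < e1) (he1' : e1 ≤ 1) (hq : 0 ≤ q)
    (hp : 0 ≤ p) (hqw : q * w ≤ p) :
    (2*e1*w*(w-1) - (w+1)^2) * p^2 ≤ w^2*e1*(p^2-q^2) - w^2*(1-e1)*(p+q)^2 := by
  have h1 : 0 ≤ (p + q*w) * (p - q*w) :=
    mul_nonneg (by nlinarith) (by linarith)
  have h2 : 0 ≤ 2*w*(1-e1)*p*(p - q*w) := by
    have h0 : 0 ≤ p * (p - q*w) := mul_nonneg hp (by linarith)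
    have := mul_nonneg (mul_nonneg (show (0:ℝ) ≤ 2*w by linarith) (show (0:ℝ) ≤ 1-e1 by linarith)) h0
    nlinarith [this]
  have h3 : 0 ≤ 4*e1*w*p^2 := by positivity
  nlinarith [h1, h2, h3]

lemma nrm_triangle_sq {d : ℕ} (v w : Fin d → ℝ) :
    ∑ j, (v j + w j)^2 ≤ (nrm v + nrm w)^2 := by
  have hcs : (∑ j, v j * w j)^2 ≤ (∑ j, (v j)^2) * ∑ j, (w j)^2 :=
    Finset.sum_mul_sq_le_sq_mul_sq _ _ _
  have hv : (nrm v)^2 = ∑ j, (v j)^2 := nrm_sq v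
  have hw : (nrm w)^2 = ∑ j, (w j)^2 := nrm_sq w
  have hv0 : 0 ≤ nrm v := Real.sqrt_nonneg _
  have hw0 : 0 ≤ nrm w := Real.sqrt_nonneg _
  have hdot : ∑ j, v j * w j ≤ nrm v * nrm w := by
    nlinarith [sq_nonneg (nrm v * nrm w - ∑ j, v j * w j), mul_nonneg hv0 hw0]
  have hexp : ∑ j, (v j + w j)^2 = (∑ j, (v j)^2) + 2*(∑ j, v j * w j) + ∑ j, (w j)^2 := by
    rw [Finset.mul_sum, ← Finset.sum_add_distrib, ← Finset.sum_add_distrib]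
    apply Finset.sum_congr rfl
    intro j _; ring
  nlinarith

lemma amgm_step (η G s c : ℝ) (hη : 0 < η) (hc : 0 ≤ c) (hG : 0 ≤ G) (hs : 0 ≤ s)
    (hCS : c^2 ≤ G * s) : 2*η*c ≤ η^2*G + s := by
  nlinarith [sq_nonneg (η^2*G - s), sq_nonneg (η^2*G + s - 2*η*c), mul_pos hη hη, sq_nonneg c,
    mul_nonneg (mul_nonneg hη.le hη.le) hG, mul_nonneg hη.le hc]

lemma sq_le_imp (a b : ℝ) (ha : 0 ≤ a) (hb : 0 ≤ b) (h : a^2 ≤ b^2) : a ≤ b := by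
  nlinarith

lemma aux_c0_nonneg (Cv Q2 P2 m2 : ℝ) (h : Cv*Q2 ≤ P2) (h1 : 1 < Cv) (hQ : 0 ≤ Q2) (hm : 0 ≤ m2) :
    0 ≤ (1/2)*m2 + (1/2)*P2 - (1/2)*Q2 := by nlinarith

lemma aux_bot (W Wb p SB SD SW : ℝ) (h : Wb*SW ≤ W*SD) (hc : Wb + p = W) (hs : SD + SB = SW) :
    W*SB ≤ p*SW := by
  have h2 : W*(SD + SB) = W*SW := by rw [hs]
  have h3 : (Wb + p)*SW = W*SW := by rw [hc]
  nlinarith [h, h2, h3]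

lemma aux_step5 (p d QL QB G s r : ℝ) (h1 : p*G ≤ d*QL) (h2 : d*QB ≤ p*(r - s)) :
    p*(G + s - r) ≤ d*(QL - QB) := by nlinarith

lemma aux_step8 (kv lv dv pv BR QD : ℝ) (hd : 0 < dv) (h5 : pv*BR ≤ dv*QD)
    (hklp : lv*dv ≤ kv*pv) (hBR : 0 ≤ BR) (hk : 0 ≤ kv) : lv*BR ≤ kv*QD := by
  have h6 : kv*(pv*BR) ≤ kv*(dv*QD) := mul_le_mul_of_nonneg_left h5 hk
  have h7 : lv*dv*BR ≤ kv*pv*BR := mul_le_mul_of_nonneg_right hklp hBR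
  have h8 : dv*(lv*BR) ≤ dv*(kv*QD) := by nlinarith
  exact le_of_mul_le_mul_left h8 hd

lemma aux_deg (lv BR kv : ℝ) (h : BR ≤ 0) (hl : 0 ≤ lv) (hk : 0 ≤ kv) :
    lv*BR ≤ kv*((0:ℝ) - 0) := by nlinarith

lemma aux_dec (o1 o2 oS eta δ GS QC M2 : ℝ) (hst : o1 ≤ oS)
    (hex : oS = o2 + (-(eta*GS)) + (1/2)*M2) (hr : M2 ≤ (1+δ)*(eta^2*GS + QC))
    (hqc : QC ≤ eta^2*GS) (hδ : 0 ≤ δ) :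
    o1 - o2 ≤ -((1 - eta*(1+δ)) * (eta * GS)) := by
  have t1 : (1+δ)*QC ≤ (1+δ)*(eta^2*GS) := mul_le_mul_of_nonneg_left hqc (by linarith)
  nlinarith [t1]

lemma aux_final (αv δ lv kv F eta GS o1 o2 : ℝ) (heta : 0 < eta) (hδ : 0 ≤ δ)
    (hu1 : eta*(1+δ) < 1) (hk : 0 < kv) (hGS : 0 ≤ GS)
    (hmain : lv * (αv * F) ≤ kv * (eta^2*GS))
    (hdec : o1 - o2 ≤ -((1 - eta*(1+δ)) * (eta * GS))) :
    o1 - o2 ≤ -(αv * (1 - eta*(1 + δ))/(eta*(1 + δ))) * (lv/kv) * F := by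
  have hu0 : 0 < eta*(1+δ) := by positivity
  have h1 : (αv * (1 - eta*(1 + δ))/(eta*(1 + δ))) * (lv/kv) * F ≤ (1 - eta*(1+δ)) * (eta * GS) := by
    have heq : (αv * (1 - eta*(1 + δ))/(eta*(1 + δ))) * (lv/kv) * F
        = (αv*(1 - eta*(1+δ))*lv*F) / ((eta*(1+δ))*kv) := by
      field_simp
    rw [heq, div_le_iff₀ (by positivity)]
    have t1 : (1-eta*(1+δ)) * (lv*(αv*F)) ≤ (1-eta*(1+δ)) * (kv*(eta^2*GS)) :=
      mul_le_mul_of_nonneg_left hmain (by linarith)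
    have t2 : 0 ≤ (1-eta*(1+δ)) * (kv*(eta^2*GS)) * δ := by
      have : 0 ≤ 1-eta*(1+δ) := by linarith
      positivity
    nlinarith [t1, t2]
  nlinarith [hdec, h1]

set_option maxHeartbeats 2000000 in
theorem stmt13 {m n k l : ℕ} (A : Matrix (Fin m) (Fin n) ℝ) (xstar : Fin n → ℝ)
    (hsp : (supp xstar).card ≤ k) (e b : Fin m → ℝ) (hb : b = A.mulVec xstar + e)
    (δ2k δ2l : ℝ) (hRIP2k : RIP A (2*k) δ2k) (hRIP2l : RIP A (2*l) δ2l)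
    (C D : ℝ) (hC : 1 < C) (hD : D = (C - Real.sqrt C)/(Real.sqrt C + 1)^2)
    (η : ℝ) (hη : 0 < η) (hη1 : η * (1 + δ2l) < 1) (hδη : δ2k < 1 - 1/(2*D*η))
    (xt : Fin n → ℝ) (It : Finset (Fin n)) (hIt : It.card = k) (hxt : lsSol A b It xt)
    (hf : (C/2) * (nrm e)^2 ≤ obj A b xt)
    (z : Fin n → ℝ) (hz : z = fun i => xt i - η * Aᵀ.mulVec (A.mulVec xt - b) i)
    (hl1 : 1 ≤ l) (hlk : l ≤ k)
    (L : Finset (Fin n)) (hLsub : L ⊆ Itᶜ) (hLcard : L.card = l)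
    (hLtop : ∀ j ∈ L, ∀ j' ∈ Itᶜ \ L, |z j'| ≤ |z j|)
    (S : Finset (Fin n)) (hSsub : S ⊆ It ∪ L) (hScard : S.card = k)
    (hStop : ∀ j ∈ S, ∀ j' ∈ (It ∪ L) \ S, |z j'| ≤ |z j|)
    (xnext : Fin n → ℝ) (hxnext : lsSol A b S xnext)
    (α c' : ℝ)
    (hα : α = min (4*η*(1 - D*η)^2*(Real.sqrt C - 1)^2/(C*D))
                  (2*((Real.sqrt C + 1)^2/C)*(2*η*D - 1/(1-δ2k))))
    (hc' : c' = α * (1 - η*(1 + δ2l))/(η*(1 + δ2l))) :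
    0 < c' ∧ obj A b xnext - obj A b xt ≤ -c' * ((l : ℝ)/(k : ℝ)) * obj A b xt := by
  -- basic constants
  have hC0 : (0:ℝ) < C := by linarith
  set w := Real.sqrt C with hwdef
  have hw2 : w^2 = C := Real.sq_sqrt hC0.le
  have hw1 : 1 < w := by nlinarith [Real.sqrt_nonneg C]
  have hw0 : 0 < w := by linarith
  have hδ2k0 : 0 ≤ δ2k := hRIP2k.1
  have hδ2k1 : δ2k < 1 := hRIP2k.2.1
  have hδ2l0 : 0 ≤ δ2l := hRIP2l.1
  have hη1' : η < 1 := by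
    have := mul_le_mul_of_nonneg_left (show (1:ℝ) ≤ 1+δ2l by linarith) hη.le
    rw [mul_one] at this; linarith
  have hwne : ((w:ℝ)+1)^2 ≠ 0 := by positivity
  have hDeq : D * (w+1)^2 = w^2 - w := by
    rw [hD, div_mul_cancel₀ _ hwne, ← hw2]
  have hD0 : 0 < D := by nlinarith [sq_nonneg (w+1)]
  have hD1 : D < 1 := by nlinarith [sq_nonneg (w+1)]
  have hDη1 : D * η < 1 := by nlinarith
  have h2Dη : 0 < 2*D*η := by positivity
  have hinv : 1/(2*D*η) < 1 - δ2k := by linarith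
  have hδk' : 0 < 1 - δ2k := by
    have : 0 < 1/(2*D*η) := by positivity
    linarith
  have h2ηD : 1/(1-δ2k) < 2*η*D := by
    rw [div_lt_iff₀ hδk']
    rw [div_lt_iff₀ h2Dη] at hinv
    linarith
  have hα1pos : 0 < 4*η*(1 - D*η)^2*(w - 1)^2/(C*D) := by
    have h1 : 0 < 1 - D*η := by linarith
    have h2 : 0 < w - 1 := by linarith
    positivity
  have hα2pos : 0 < 2*((w + 1)^2/C)*(2*η*D - 1/(1-δ2k)) := by
    have h1 : 0 < 2*η*D - 1/(1-δ2k) := by linarith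
    positivity
  have hα0 : 0 < α := by rw [hα]; exact lt_min hα1pos hα2pos
  have hu0 : 0 < η*(1+δ2l) := by positivity
  have hu1 : 0 < 1 - η*(1+δ2l) := by linarith
  have hc'0 : 0 < c' := by
    rw [hc']
    exact div_pos (mul_pos hα0 hu1) hu0
  refine ⟨hc'0, ?_⟩
  classical
  -- gradient and basic pointwise facts
  set g : Fin n → ℝ := Aᵀ.mulVec (A.mulVec xt - b) with hgdef
  have hg0 : ∀ i ∈ It, g i = 0 := fun i hi => hxt.2 i hi
  have hxt0 : ∀ i, i ∉ It → xt i = 0 := by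
    intro i hi
    by_contra hne
    exact hi (hxt.1 (by simp [supp, hne]))
  have hzeq : ∀ i, z i = xt i - η * g i := fun i => by rw [hz]
  have hzIt : ∀ i ∈ It, z i = xt i := fun i hi => by rw [hzeq i, hg0 i hi]; ring
  have hznIt : ∀ i, i ∉ It → z i = -(η * g i) := fun i hi => by rw [hzeq i, hxt0 i hi]; ring
  have hxs0 : ∀ i, i ∉ supp xstar → xstar i = 0 := by
    intro i hi; by_contra hne; exact hi (by simp [supp, hne])
  set Tt := supp xstar with hTt
  set Dl := Tt \ It with hDl
  set Wt := It \ Tt with hWtdef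
  set dd := Dl.card with hdd
  set pp := min l dd with hppdef
  have hdk : dd ≤ k := le_trans (Finset.card_le_card Finset.sdiff_subset) hsp
  have hWd : dd ≤ Wt.card := by
    have h1 := Finset.card_sdiff_add_card_inter Tt It
    have h2 := Finset.card_sdiff_add_card_inter It Tt
    rw [← hDl] at h1
    rw [← hWtdef] at h2
    have h3 : (Tt ∩ It).card = (It ∩ Tt).card := by rw [Finset.inter_comm]
    omega
  -- objective values
  set P := nrm (A.mulVec xt - b) with hPdef
  set Q := nrm e with hQdef
  have hP0 : 0 ≤ P := Real.sqrt_nonneg _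
  have hQ0 : 0 ≤ Q := Real.sqrt_nonneg _
  have hFval : obj A b xt = (1/2)*P^2 := rfl
  have hstarval : obj A b xstar = (1/2)*Q^2 := by
    have hne : A.mulVec xstar - b = -e := by rw [hb]; abel
    rw [obj, hne]
    have : nrm (-e) = nrm e := by
      unfold nrm
      congr 1
      apply Finset.sum_congr rfl
      intro i _
      simp
    rw [this]
  have hFQ : C*Q^2 ≤ P^2 := by
    have := hf; rw [hFval] at this; linarith
  have hQP : Q*w ≤ P := by
    have h1 : (Q*w)^2 ≤ P^2 := by rw [mul_pow, hw2]; linarith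
    exact sq_le_imp _ _ (mul_nonneg hQ0 hw0.le) hP0 h1
  -- quadratic quantities
  set GD := ∑ i ∈ Dl, (g i)^2 with hGDdef
  set s2 := ∑ i ∈ Dl, (xstar i)^2 with hs2def
  set r2 := ∑ i, ((xt - xstar) i)^2 with hr2def
  set m2 := ∑ j, ((A.mulVec (xt - xstar)) j)^2 with hm2def
  have hGD0 : 0 ≤ GD := Finset.sum_nonneg (fun i _ => sq_nonneg _)
  have hs20 : 0 ≤ s2 := Finset.sum_nonneg (fun i _ => sq_nonneg _)
  have hm20 : 0 ≤ m2 := Finset.sum_nonneg (fun i _ => sq_nonneg _)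
  have hr20 : 0 ≤ r2 := Finset.sum_nonneg (fun i _ => sq_nonneg _)
  -- the inner product identity
  have hdot1 : dotp g (xstar - xt) = ∑ i ∈ Dl, g i * xstar i := by
    rw [dotp, ← Finset.sum_subset (Finset.subset_univ Dl)]
    · apply Finset.sum_congr rfl
      intro i hi
      have hiIt : i ∉ It := (Finset.mem_sdiff.mp hi).2
      simp only [Pi.sub_apply]
      rw [hxt0 i hiIt]
      ring
    · intro i _ hiD
      by_cases hiIt : i ∈ It
      · rw [hg0 i hiIt]; ring
      · have hiT : i ∉ Tt := fun h => hiD (Finset.mem_sdiff.mpr ⟨h, hiIt⟩)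
        simp only [Pi.sub_apply]
        rw [hxs0 i hiT, hxt0 i hiIt]
        ring
  have hexp := obj_expand A b xt xstar
  have hexpm : (nrm (A.mulVec (xstar - xt)))^2 = m2 := by
    rw [nrm_sq, hm2def]
    apply Finset.sum_congr rfl
    intro j _
    have hneg : A.mulVec (xstar - xt) j = -(A.mulVec (xt - xstar) j) := by
      rw [Matrix.mulVec_sub, Matrix.mulVec_sub]
      simp
    rw [hneg]
    ring
  have hc0eq : ∑ i ∈ Dl, g i * xstar i = obj A b xstar - obj A b xt - (1/2)*m2 := by
    rw [← hdot1]
    rw [hexpm] at hexp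
    linarith [hexp]
  set c0 : ℝ := (1/2)*m2 + obj A b xt - obj A b xstar with hc0def
  have hc0neg : ∑ i ∈ Dl, g i * xstar i = -c0 := by rw [hc0eq, hc0def]; ring
  have hc00 : 0 ≤ c0 := by
    rw [hc0def, hFval, hstarval]
    have := aux_c0_nonneg C (Q^2) (P^2) m2 hFQ hC (sq_nonneg Q) hm20
    linarith
  have hCS : c0^2 ≤ GD * s2 := by
    have := Finset.sum_mul_sq_le_sq_mul_sq Dl g xstar
    have h2 : (∑ i ∈ Dl, g i * xstar i)^2 = c0^2 := by rw [hc0neg]; ring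
    rw [h2] at this
    exact this
  have hkey1 : 2*η*c0 ≤ η^2*GD + s2 := amgm_step η GD s2 c0 hη hc00 hGD0 hs20 hCS
  rw [hc0def, hFval, hstarval] at hkey1
  -- RIP lower bound on xt - xstar
  have hsuppsub : supp (xt - xstar) ⊆ It ∪ Tt := by
    intro i hi
    simp only [supp, Finset.mem_filter] at hi
    by_contra hni
    rw [Finset.mem_union] at hni
    push_neg at hni
    exact hi.2 (by simp only [Pi.sub_apply]; rw [hxt0 i hni.1, hxs0 i hni.2]; ring)
  have hcard2k : (supp (xt - xstar)).card ≤ 2*k := by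
    have h1 := Finset.card_le_card hsuppsub
    have h2 := Finset.card_union_le It Tt
    omega
  have hrip := (hRIP2k.2.2 (xt - xstar) hcard2k).1
  rw [nrm_sq, nrm_sq] at hrip
  -- hrip : (1-δ2k) * r2 ≤ m2  (after defeq of sums)
  have hrip' : (1-δ2k) * r2 ≤ m2 := hrip
  -- triangle bound on m2
  have hAe : ∀ j, A.mulVec (xt - xstar) j = (A.mulVec xt - b) j + e j := by
    intro j
    rw [Matrix.mulVec_sub]
    simp only [Pi.sub_apply, Pi.add_apply, hb]
    ring
  have hm2up : m2 ≤ (P+Q)^2 := by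
    have htri := nrm_triangle_sq (A.mulVec xt - b) e
    calc m2 = ∑ j, ((A.mulVec xt - b) j + e j)^2 := Finset.sum_congr rfl (fun j _ => by rw [hAe j])
    _ ≤ (P+Q)^2 := htri
  -- the analytic core: bracket lower bound
  have hbracket : α * ((1/2)*P^2) ≤ η^2*GD + s2 - r2 := by
    have he10 : 0 < η*(1-δ2k) := mul_pos hη hδk'
    have he11 : η*(1-δ2k) ≤ 1 :=
      mul_le_one₀ hη1'.le (by linarith) (by linarith)
    have t1 : (1-δ2k)*(2*η*((1/2)*m2 + (1/2)*P^2 - (1/2)*Q^2)) ≤ (1-δ2k)*(η^2*GD + s2) :=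
      mul_le_mul_of_nonneg_left hkey1 hδk'.le
    have t2 : (1-η*(1-δ2k))*m2 ≤ (1-η*(1-δ2k))*(P+Q)^2 :=
      mul_le_mul_of_nonneg_left hm2up (by linarith)
    have base : (η*(1-δ2k))*(P^2-Q^2) - (1-η*(1-δ2k))*(P+Q)^2 ≤ (1-δ2k)*(η^2*GD + s2 - r2) := by
      linarith [t1, t2, hrip']
    have hB1 : w^2*((η*(1-δ2k))*(P^2-Q^2) - (1-η*(1-δ2k))*(P+Q)^2) ≤ w^2*((1-δ2k)*(η^2*GD + s2 - r2)) :=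
      mul_le_mul_of_nonneg_left base (sq_nonneg w)
    have hB2 := core_poly w (η*(1-δ2k)) P Q hw1 he10 he11 hQ0 hP0 hQP
    have hαle : α ≤ 2*((w + 1)^2/C)*(2*η*D - 1/(1-δ2k)) := by
      rw [hα]; exact min_le_right _ _
    have hident : w^2*((1-δ2k)*((2*((w + 1)^2/C)*(2*η*D - 1/(1-δ2k))) * ((1/2)*P^2)))
        = (2*(η*(1-δ2k))*w*(w-1) - (w+1)^2)*P^2 := by
      rw [← hw2]
      have hDval : D = (w^2-w)/(w+1)^2 := by rw [hD, ← hw2]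
      rw [hDval]
      field_simp
    have hstep : w^2*((1-δ2k)*(α * ((1/2)*P^2))) ≤ w^2*((1-δ2k)*(η^2*GD + s2 - r2)) := by
      calc w^2*((1-δ2k)*(α * ((1/2)*P^2)))
          ≤ w^2*((1-δ2k)*((2*((w + 1)^2/C)*(2*η*D - 1/(1-δ2k))) * ((1/2)*P^2))) := by
            apply mul_le_mul_of_nonneg_left _ (sq_nonneg w)
            apply mul_le_mul_of_nonneg_left _ hδk'.le
            apply mul_le_mul_of_nonneg_right hαle (by positivity)
      _ = (2*(η*(1-δ2k))*w*(w-1) - (w+1)^2)*P^2 := hident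
      _ ≤ w^2*((η*(1-δ2k))*(P^2-Q^2) - (1-η*(1-δ2k))*(P+Q)^2) := by
            linarith [hB2]
      _ ≤ w^2*((1-δ2k)*(η^2*GD + s2 - r2)) := hB1
    have hpos : 0 < w^2*(1-δ2k) := by positivity
    have hstep' : (w^2*(1-δ2k))*(α * ((1/2)*P^2)) ≤ (w^2*(1-δ2k))*(η^2*GD + s2 - r2) := by
      linarith [hstep]
    exact le_of_mul_le_mul_left hstep' hpos
  -- ===== combinatorial part =====
  have hppl : pp ≤ l := min_le_left _ _
  have hppd : pp ≤ dd := min_le_right _ _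
  obtain ⟨Lam, hLamL, hLamcard, hLamtop⟩ :=
    exists_extreme (fun i => (z i)^2) pp L (by rw [hLcard]; exact hppl)
  have hLamIt : ∀ i ∈ Lam, i ∉ It := fun i hi => by
    have := hLsub (hLamL hi)
    simpa [Finset.mem_compl] using this
  have hLamIt' : Lam ⊆ Itᶜ := fun i hi => Finset.mem_compl.mpr (hLamIt i hi)
  have hDlIt : Dl ⊆ Itᶜ := fun i hi => Finset.mem_compl.mpr (Finset.mem_sdiff.mp hi).2
  have hLamtop' : ∀ a ∈ Lam, ∀ b ∈ Itᶜ \ Lam, (z b)^2 ≤ (z a)^2 := by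
    intro a ha b hb
    rcases Finset.mem_sdiff.mp hb with ⟨hbIt, hbLam⟩
    by_cases hbL : b ∈ L
    · exact hLamtop a ha b (Finset.mem_sdiff.mpr ⟨hbL, hbLam⟩)
    · have habs := hLtop a (hLamL ha) b (Finset.mem_sdiff.mpr ⟨hbIt, hbL⟩)
      calc (z b)^2 = |z b|^2 := (sq_abs _).symm
      _ ≤ |z a|^2 := by exact pow_le_pow_left₀ (abs_nonneg _) habs 2
      _ = (z a)^2 := sq_abs _
  have hAVG1 : (pp:ℝ) * ∑ i ∈ Dl, (z i)^2 ≤ (dd:ℝ) * ∑ i ∈ Lam, (z i)^2 := by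
    have h := avg_top (fun i => (z i)^2) (fun i => sq_nonneg _) Lam Dl Itᶜ hLamIt' hDlIt
      hLamtop' (by rw [hLamcard, ← hdd]; exact hppd)
    rwa [hLamcard, ← hdd] at h
  have hzDl : ∑ i ∈ Dl, (z i)^2 = η^2*GD := by
    rw [hGDdef, Finset.mul_sum]
    apply Finset.sum_congr rfl
    intro i hi
    rw [hznIt i (Finset.mem_sdiff.mp hi).2]
    ring
  -- bottom set B inside Wt
  obtain ⟨Bb, hBW, hBcard, hBtop⟩ :=
    exists_extreme (fun i => -((xt i)^2)) pp Wt (le_trans hppd hWd)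
  have hBIt : Bb ⊆ It := fun i hi => (Finset.mem_sdiff.mp (hBW hi)).1
  have hBOT : (Wt.card:ℝ) * ∑ i ∈ Bb, (xt i)^2 ≤ (pp:ℝ) * ∑ i ∈ Wt, (xt i)^2 := by
    have htop2 : ∀ a ∈ Wt \ Bb, ∀ b ∈ Wt \ (Wt \ Bb), (xt b)^2 ≤ (xt a)^2 := by
      intro a ha b hb
      rcases Finset.mem_sdiff.mp hb with ⟨hbW, hnb⟩
      have hbB : b ∈ Bb := by
        by_contra h
        exact hnb (Finset.mem_sdiff.mpr ⟨hbW, h⟩)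
      have := hBtop b hbB a ha
      linarith
    have h := avg_top (fun i => (xt i)^2) (fun i => sq_nonneg _) (Wt \ Bb) Wt Wt
      Finset.sdiff_subset (Finset.Subset.refl _) htop2 (Finset.card_le_card Finset.sdiff_subset)
    have hsplit : ∑ i ∈ Wt \ Bb, (xt i)^2 + ∑ i ∈ Bb, (xt i)^2 = ∑ i ∈ Wt, (xt i)^2 :=
      Finset.sum_sdiff hBW
    have hcards : (Wt \ Bb).card + pp = Wt.card := by
      rw [← hBcard]
      exact Finset.card_sdiff_add_card_eq_card hBW
    have hcR : ((Wt \ Bb).card : ℝ) + (pp:ℝ) = (Wt.card : ℝ) := by exact_mod_cast hcards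
    exact aux_bot _ _ _ _ _ _ h hcR hsplit
  -- sum over Wt bounded by r2 - s2
  have hWsum : ∑ i ∈ Wt, (xt i)^2 + s2 ≤ r2 := by
    have h1 : ∑ i ∈ Wt, (xt i)^2 = ∑ i ∈ Wt, ((xt - xstar) i)^2 :=
      Finset.sum_congr rfl (fun i hi => by
        simp only [Pi.sub_apply]
        rw [hxs0 i (Finset.mem_sdiff.mp hi).2]
        ring)
    have h2 : s2 = ∑ i ∈ Dl, ((xt - xstar) i)^2 := by
      rw [hs2def]
      refine Finset.sum_congr rfl (fun i hi => ?_)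
      simp only [Pi.sub_apply]
      rw [hxt0 i (Finset.mem_sdiff.mp hi).2]
      ring
    have hdisj : Disjoint Wt Dl := by
      rw [Finset.disjoint_left]
      intro i hiW hiD
      exact (Finset.mem_sdiff.mp hiD).2 (Finset.mem_sdiff.mp hiW).1
    rw [h1, h2, ← Finset.sum_union hdisj, hr2def]
    exact Finset.sum_le_sum_of_subset_of_nonneg (Finset.subset_univ _) (fun i _ _ => sq_nonneg _)
  set QL := ∑ i ∈ Lam, (z i)^2 with hQLdef
  set QB := ∑ i ∈ Bb, (z i)^2 with hQBdef
  have hQL0 : 0 ≤ QL := Finset.sum_nonneg (fun i _ => sq_nonneg _)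
  have hQB0 : 0 ≤ QB := Finset.sum_nonneg (fun i _ => sq_nonneg _)
  have hQBxt : QB = ∑ i ∈ Bb, (xt i)^2 :=
    Finset.sum_congr rfl (fun i hi => by rw [hzIt i (hBIt hi)])
  have hFnn : (0:ℝ) ≤ (1/2)*P^2 := by positivity
  have hbrnn : 0 ≤ η^2*GD + s2 - r2 :=
    le_trans (by positivity) hbracket
  have hmain_comb : (l:ℝ) * (η^2*GD + s2 - r2) ≤ (k:ℝ) * (QL - QB) := by
    by_cases hd0 : dd = 0
    · have hDle : Dl = ∅ := Finset.card_eq_zero.mp (by omega)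
      have hGD0' : GD = 0 := by rw [hGDdef, hDle]; simp
      have hs20' : s2 = 0 := by rw [hs2def, hDle]; simp
      have hbr0 : η^2*GD + s2 - r2 ≤ 0 := by rw [hGD0', hs20']; simpa using hr20
      have hpp0 : pp = 0 := by omega
      have hLam0 : Lam = ∅ := Finset.card_eq_zero.mp (by rw [hLamcard, hpp0])
      have hBb0 : Bb = ∅ := Finset.card_eq_zero.mp (by rw [hBcard, hpp0])
      have hql : QL = 0 := by rw [hQLdef, hLam0]; simp
      have hqb : QB = 0 := by rw [hQBdef, hBb0]; simp
      rw [hql, hqb]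
      exact aux_deg _ _ _ hbr0 (Nat.cast_nonneg _) (Nat.cast_nonneg _)
    · have hdpos : (0:ℝ) < dd := by
        have : 0 < dd := Nat.pos_of_ne_zero hd0
        exact_mod_cast this
      have hpp00 : (0:ℝ) ≤ pp := Nat.cast_nonneg _
      have hk0' : (0:ℝ) ≤ k := Nat.cast_nonneg _
      have hq1 : (dd:ℝ) * QB ≤ (Wt.card:ℝ) * QB := by
        apply mul_le_mul_of_nonneg_right _ hQB0
        exact_mod_cast hWd
      have hq2 : (Wt.card:ℝ) * QB ≤ (pp:ℝ) * ∑ i ∈ Wt, (xt i)^2 := by rw [hQBxt]; exact hBOT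
      have hq3 : (pp:ℝ) * ∑ i ∈ Wt, (xt i)^2 ≤ (pp:ℝ) * (r2 - s2) :=
        mul_le_mul_of_nonneg_left (by linarith [hWsum]) hpp00
      have hq4 : (pp:ℝ) * (η^2*GD) ≤ (dd:ℝ) * QL := by
        rw [← hzDl]
        exact hAVG1
      have h5 : (pp:ℝ) * (η^2*GD + s2 - r2) ≤ (dd:ℝ) * (QL - QB) :=
        aux_step5 _ _ _ _ _ _ _ hq4 (le_trans hq1 (le_trans hq2 hq3))
      have hklp : (l:ℝ)*(dd:ℝ) ≤ (k:ℝ)*(pp:ℝ) := by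
        have hnat : l*dd ≤ k*pp := by
          rcases Nat.le_total l dd with h | h
          · have hppe : pp = l := by omega
            rw [hppe, Nat.mul_comm k l]
            exact Nat.mul_le_mul (le_refl l) hdk
          · have hppe : pp = dd := by omega
            rw [hppe]
            exact Nat.mul_le_mul hlk (le_refl dd)
        exact_mod_cast hnat
      exact aux_step8 _ _ _ _ _ _ hdpos h5 hklp hbrnn hk0'
  -- ===== decrease chain =====
  set wS := restr z S with hwSdef
  have hwSS : ∀ i ∈ S, wS i = z i := fun i hi => by rw [hwSdef]; simp [restr, hi]
  have hwSn : ∀ i, i ∉ S → wS i = 0 := fun i hi => by rw [hwSdef]; simp [restr, hi]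
  have hsuppwS : supp wS ⊆ S := by
    intro i hi
    by_contra hns
    simp only [supp, Finset.mem_filter] at hi
    exact hi.2 (hwSn i hns)
  have hstep0 : obj A b xnext ≤ obj A b wS := lsSol_min A b S xnext wS hxnext hsuppwS
  have hexp2 := obj_expand A b xt wS
  set GS := ∑ i ∈ S \ It, (g i)^2 with hGSdef
  have hGS0 : 0 ≤ GS := Finset.sum_nonneg (fun i _ => sq_nonneg _)
  have hvan : ∀ i ∈ Finset.univ, i ∉ S \ It → g i * ((wS - xt) i) = 0 := by
    intro i _ hiD
    simp only [Pi.sub_apply]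
    by_cases hiIt : i ∈ It
    · rw [hg0 i hiIt]; ring
    · have hiS : i ∉ S := fun h => hiD (Finset.mem_sdiff.mpr ⟨h, hiIt⟩)
      rw [hwSn i hiS, hxt0 i hiIt]
      ring
  have hdot2 : dotp g (wS - xt) = -(η * GS) := by
    rw [dotp, ← Finset.sum_subset (Finset.subset_univ (S \ It)) hvan]
    have hterm : ∀ i ∈ S \ It, g i * ((wS - xt) i) = -(η * (g i)^2) := by
      intro i hi
      rcases Finset.mem_sdiff.mp hi with ⟨hiS, hiIt⟩
      simp only [Pi.sub_apply]
      rw [hwSS i hiS, hxt0 i hiIt, hznIt i hiIt]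
      ring
    rw [Finset.sum_congr rfl hterm, Finset.sum_neg_distrib, ← Finset.mul_sum, hGSdef]
  have hzero : ∀ i, i ∉ (S \ It) ∪ (It \ S) → (wS - xt) i = 0 := by
    intro i hi
    rw [Finset.mem_union] at hi
    push_neg at hi
    simp only [Pi.sub_apply]
    by_cases hiS : i ∈ S
    · have hiIt : i ∈ It := by
        by_contra h
        exact hi.1 (Finset.mem_sdiff.mpr ⟨hiS, h⟩)
      rw [hwSS i hiS, hzIt i hiIt]
      ring
    · have hiIt : i ∉ It := by
        by_contra h
        exact hi.2 (Finset.mem_sdiff.mpr ⟨h, hiS⟩)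
      rw [hwSn i hiS, hxt0 i hiIt]
      ring
  have hsupp3 : supp (wS - xt) ⊆ (S \ It) ∪ (It \ S) := by
    intro i hi
    simp only [supp, Finset.mem_filter] at hi
    by_contra hn
    exact hi.2 (hzero i hn)
  have hSL : S \ It ⊆ L := by
    intro i hi
    rcases Finset.mem_sdiff.mp hi with ⟨hiS, hiIt⟩
    rcases Finset.mem_union.mp (hSsub hiS) with h | h
    · exact absurd h hiIt
    · exact h
  have hsd1 : (S \ It).card ≤ l := by rw [← hLcard]; exact Finset.card_le_card hSL
  have hsdeq : (It \ S).card = (S \ It).card := by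
    have h1 := Finset.card_sdiff_add_card_inter S It
    have h2 := Finset.card_sdiff_add_card_inter It S
    have h3 : (S ∩ It).card = (It ∩ S).card := by rw [Finset.inter_comm]
    omega
  have hcard2l : (supp (wS - xt)).card ≤ 2*l := by
    have h1 := Finset.card_le_card hsupp3
    have h2 := Finset.card_union_le (S \ It) (It \ S)
    omega
  have hrip2 := (hRIP2l.2.2 (wS - xt) hcard2l).2
  rw [nrm_sq (wS - xt)] at hrip2
  set QC := ∑ i ∈ It \ S, (z i)^2 with hQCdef
  have hQC0 : 0 ≤ QC := Finset.sum_nonneg (fun i _ => sq_nonneg _)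
  have hQA : ∑ i ∈ S \ It, (z i)^2 = η^2*GS := by
    rw [hGSdef, Finset.mul_sum]
    apply Finset.sum_congr rfl
    intro i hi
    rw [hznIt i (Finset.mem_sdiff.mp hi).2]
    ring
  have hdisjSIt : Disjoint (S \ It) (It \ S) := by
    rw [Finset.disjoint_left]
    intro i h1 h2
    exact (Finset.mem_sdiff.mp h1).2 (Finset.mem_sdiff.mp h2).1
  have hsumsplit : ∑ i, ((wS - xt) i)^2 = η^2*GS + QC := by
    rw [← Finset.sum_subset (Finset.subset_univ ((S \ It) ∪ (It \ S)))
      (fun i _ hi => by rw [hzero i hi]; ring)]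
    rw [Finset.sum_union hdisjSIt]
    congr 1
    · rw [← hQA]
      apply Finset.sum_congr rfl
      intro i hi
      rcases Finset.mem_sdiff.mp hi with ⟨hiS, hiIt⟩
      simp only [Pi.sub_apply]
      rw [hwSS i hiS, hxt0 i hiIt]
      ring
    · rw [hQCdef]
      apply Finset.sum_congr rfl
      intro i hi
      rcases Finset.mem_sdiff.mp hi with ⟨hiIt, hiS⟩
      simp only [Pi.sub_apply]
      rw [hwSn i hiS, hzIt i hiIt]
      ring
  have hQCle : QC ≤ η^2*GS := by
    rw [hQCdef, ← hQA]
    apply sum_cmp (fun i => (z i)^2) (fun i => sq_nonneg _)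
    · intro a ha b hb
      have haIL : a ∈ (It ∪ L) \ S :=
        Finset.mem_sdiff.mpr ⟨Finset.mem_union_left _ (Finset.mem_sdiff.mp ha).1,
          (Finset.mem_sdiff.mp ha).2⟩
      have habs := hStop b (Finset.mem_sdiff.mp hb).1 a haIL
      calc (z a)^2 = |z a|^2 := (sq_abs _).symm
      _ ≤ |z b|^2 := by exact pow_le_pow_left₀ (abs_nonneg _) habs 2
      _ = (z b)^2 := sq_abs _
    · omega
  have hrip2' : (nrm (A.mulVec (wS - xt)))^2 ≤ (1+δ2l)*(η^2*GS + QC) := by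
    rw [← hsumsplit]
    exact hrip2
  have hdec : obj A b xnext - obj A b xt ≤ -((1 - η*(1+δ2l)) * (η * GS)) := by
    have hex : obj A b wS = obj A b xt + (-(η*GS)) + (1/2)*((nrm (A.mulVec (wS - xt)))^2) := by
      rw [hexp2, hdot2]
    exact aux_dec _ _ _ _ _ _ _ _ hstep0 hex hrip2' hQCle hδ2l0
  -- ===== TOPSET comparison =====
  set S' := (It \ Bb) ∪ Lam with hS'def
  have hdisj4 : Disjoint (It \ Bb) Lam := by
    rw [Finset.disjoint_left]
    intro i h1 h2
    exact hLamIt i h2 (Finset.mem_sdiff.mp h1).1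
  have hS'sum : ∑ i ∈ S', (z i)^2 = (∑ i ∈ It, (z i)^2 - QB) + QL := by
    rw [hS'def, Finset.sum_union hdisj4]
    congr 1
    have hsd := Finset.sum_sdiff (f := fun i => (z i)^2) hBIt
    rw [hQBdef]
    linarith only [hsd]
  have hS'subIL : S' ⊆ It ∪ L := by
    rw [hS'def]
    apply Finset.union_subset
    · exact le_trans Finset.sdiff_subset Finset.subset_union_left
    · exact le_trans (le_trans hLamL (le_refl L)) Finset.subset_union_right
  have hS'card : S'.card ≤ k := by
    rw [hS'def]
    have h1 := Finset.card_union_le (It \ Bb) Lam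
    have h2 : (It \ Bb).card + Bb.card = It.card := Finset.card_sdiff_add_card_eq_card hBIt
    omega
  have hTOP : ∑ i ∈ S', (z i)^2 ≤ ∑ i ∈ S, (z i)^2 := by
    have hPle : ∑ i ∈ S' \ S, (z i)^2 ≤ ∑ i ∈ S \ S', (z i)^2 := by
      apply sum_cmp (fun i => (z i)^2) (fun i => sq_nonneg _)
      · intro a ha b hb
        have haIL : a ∈ (It ∪ L) \ S :=
          Finset.mem_sdiff.mpr ⟨hS'subIL (Finset.mem_sdiff.mp ha).1, (Finset.mem_sdiff.mp ha).2⟩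
        have habs := hStop b (Finset.mem_sdiff.mp hb).1 a haIL
        calc (z a)^2 = |z a|^2 := (sq_abs _).symm
        _ ≤ |z b|^2 := by exact pow_le_pow_left₀ (abs_nonneg _) habs 2
        _ = (z b)^2 := sq_abs _
      · have h1 := Finset.card_sdiff_add_card_inter S' S
        have h2 := Finset.card_sdiff_add_card_inter S S'
        have h3 : (S' ∩ S).card = (S ∩ S').card := by rw [Finset.inter_comm]
        omega
    have e1 := Finset.sum_inter_add_sum_sdiff S' S (fun i => (z i)^2)
    have e2 := Finset.sum_inter_add_sum_sdiff S S' (fun i => (z i)^2)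
    have e3 : ∑ i ∈ S' ∩ S, (z i)^2 = ∑ i ∈ S ∩ S', (z i)^2 := by rw [Finset.inter_comm]
    linarith only [hPle, e1, e2, e3]
  have hItsplit : ∑ i ∈ It, (z i)^2 = ∑ i ∈ It ∩ S, (z i)^2 + QC := by
    rw [hQCdef]
    exact (Finset.sum_inter_add_sum_sdiff It S _).symm
  have hSsplit : ∑ i ∈ S, (z i)^2 = ∑ i ∈ S ∩ It, (z i)^2 + η^2*GS := by
    rw [← hQA]
    exact (Finset.sum_inter_add_sum_sdiff S It _).symm
  have hinterc : ∑ i ∈ It ∩ S, (z i)^2 = ∑ i ∈ S ∩ It, (z i)^2 := by rw [Finset.inter_comm]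
  have hQdiff : QL - QB ≤ η^2*GS := by
    linarith only [hTOP, hS'sum, hItsplit, hSsplit, hinterc, hQC0]
  -- ===== final assembly =====
  have hk0R : (0:ℝ) < (k:ℝ) := by
    have : 0 < k := by omega
    exact_mod_cast this
  have hl0R : (0:ℝ) ≤ (l:ℝ) := Nat.cast_nonneg _
  have hmainGS : (l:ℝ) * (α * ((1/2)*P^2)) ≤ (k:ℝ) * (η^2*GS) := by
    have t1 : (l:ℝ) * (α * ((1/2)*P^2)) ≤ (l:ℝ) * (η^2*GD + s2 - r2) :=
      mul_le_mul_of_nonneg_left hbracket hl0R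
    have t2 : (k:ℝ)*(QL - QB) ≤ (k:ℝ)*(η^2*GS) := mul_le_mul_of_nonneg_left hQdiff hk0R.le
    exact le_trans t1 (le_trans hmain_comb t2)
  rw [hc', hFval]
  rw [hFval] at hdec
  exact aux_final α δ2l (l:ℝ) (k:ℝ) ((1/2)*P^2) η GS (obj A b xnext) ((1/2)*P^2)
    hη hδ2l0 hη1 hk0R hGS0 hmainGS hdec
end

section
/- Let r, x*, x' ∈ ℝ^d with ‖x*‖ = ‖x'‖ = 1. Let c > 0 satisfy ⟨r, x*⟩ ≥ c and 1 + ‖r‖² − 2c > 0. Let ε ≥ 0 and let α satisfy 0 ≤ α ≤ 2c/(1 + ‖r‖² − 2c). If ‖x' − r‖² ≤ (1 + αε)‖x* − r‖² (i.e., x' is a (1+αε)-approximate nearest neighbor to r), then ⟨r, x'⟩ ≥ (1 − ε)⟨r, x*⟩ (i.e., x' is a (1−ε)-approximate similar neighbor to r). -/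
open Finset Matrix

theorem stmt14 {d : ℕ} (r xstar x' : Fin d → ℝ)
    (hxs : nrm xstar = 1) (hx' : nrm x' = 1)
    (c : ℝ) (hc : 0 < c) (hrc : c ≤ dotp r xstar)
    (hpos : 0 < 1 + (nrm r)^2 - 2*c)
    (ε : ℝ) (hε : 0 ≤ ε)
    (α : ℝ) (hα0 : 0 ≤ α) (hα : α ≤ 2*c/(1 + (nrm r)^2 - 2*c))
    (hnn : (nrm (fun i => x' i - r i))^2 ≤ (1 + α*ε) * (nrm (fun i => xstar i - r i))^2) :
    (1 - ε) * dotp r xstar ≤ dotp r x' := by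
  have hxs2 : ∑ i, (xstar i)^2 = 1 := by rw [← nrm_sq, hxs]; norm_num
  have hx'2 : ∑ i, (x' i)^2 = 1 := by rw [← nrm_sq, hx']; norm_num
  have e1 : (nrm (fun i => x' i - r i))^2 = 1 + (nrm r)^2 - 2 * dotp r x' := by
    rw [nrm_sq, nrm_sq]
    unfold dotp
    rw [← hx'2]
    rw [Finset.mul_sum, ← Finset.sum_add_distrib, ← Finset.sum_sub_distrib]
    exact Finset.sum_congr rfl fun i _ => by ring
  have e2 : (nrm (fun i => xstar i - r i))^2 = 1 + (nrm r)^2 - 2 * dotp r xstar := by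
    rw [nrm_sq, nrm_sq]
    unfold dotp
    rw [← hxs2]
    rw [Finset.mul_sum, ← Finset.sum_add_distrib, ← Finset.sum_sub_distrib]
    exact Finset.sum_congr rfl fun i _ => by ring
  rw [e1, e2] at hnn
  have hαb : α * (1 + (nrm r)^2 - 2*c) ≤ 2*c := by
    rw [le_div_iff₀ hpos] at hα; linarith
  have hsq : 0 ≤ 1 + (nrm r)^2 - 2 * dotp r xstar := by
    rw [← e2]; positivity
  have h1 : α * (1 + (nrm r)^2 - 2 * dotp r xstar) ≤ 2 * dotp r xstar := by
    have : α * (1 + (nrm r)^2 - 2 * dotp r xstar) ≤ α * (1 + (nrm r)^2 - 2*c) := by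
      apply mul_le_mul_of_nonneg_left _ hα0; linarith
    linarith
  have h2 : ε * (α * (1 + (nrm r)^2 - 2 * dotp r xstar)) ≤ ε * (2 * dotp r xstar) :=
    mul_le_mul_of_nonneg_left h1 hε
  nlinarith [hnn, h2]
end

section
/- Let x* ∈ ℝ^n be k-sparse with support I* = supp(x*), b = Ax*, and suppose A satisfies the RIP of order 2k with constant δ satisfying δ < 1/2. Let I ⊆ {1,…,n} with |I| ≤ k. Then for every x ∈ ℝ^n with supp(x) ⊆ I, (1/2)‖Ax − b‖² ≥ ((1 − 2δ)²/(2(1 − δ))) ‖(x*)_{I*\I}‖². -/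
open Finset Matrix

theorem stmt19 {m n k : ℕ} (A : Matrix (Fin m) (Fin n) ℝ) (xstar : Fin n → ℝ)
    (hsp : (supp xstar).card ≤ k)
    (Istar : Finset (Fin n)) (hIstar : Istar = supp xstar)
    (b : Fin m → ℝ) (hb : b = A.mulVec xstar)
    (δ : ℝ) (hδ : δ < 1/2) (hRIP : RIP A (2*k) δ)
    (I : Finset (Fin n)) (hI : I.card ≤ k) :
    ∀ x : Fin n → ℝ, supp x ⊆ I →
      ((1 - 2*δ)^2/(2*(1-δ))) * (nrm (restr xstar (Istar \ I)))^2
        ≤ (1/2) * (nrm (A.mulVec x - b))^2 := by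
  intro x hx
  obtain ⟨hδ0, hδ1, hA⟩ := hRIP
  have hx0 : ∀ i, i ∉ I → x i = 0 := by
    intro i hi
    by_contra h
    exact hi (hx (by simp [supp, h]))
  have hxs0 : ∀ i, i ∉ Istar → xstar i = 0 := by
    intro i hi
    by_contra h
    rw [hIstar] at hi
    exact hi (by simp [supp, h])
  have hsupp : supp (x - xstar) ⊆ I ∪ Istar := by
    intro i hi
    simp only [supp, Finset.mem_filter, Finset.mem_univ, true_and, Pi.sub_apply] at hi
    by_contra h
    simp only [Finset.mem_union, not_or] at h
    rw [hx0 i h.1, hxs0 i h.2] at hi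
    simp at hi
  have hcard : (supp (x - xstar)).card ≤ 2 * k := by
    calc (supp (x - xstar)).card ≤ (I ∪ Istar).card := Finset.card_le_card hsupp
    _ ≤ I.card + Istar.card := Finset.card_union_le _ _
    _ ≤ 2 * k := by rw [hIstar]; omega
  have hkey := (hA (x - xstar) hcard).1
  have hN : (nrm (restr xstar (Istar \ I)))^2 ≤ (nrm (x - xstar))^2 := by
    rw [nrm_sq, nrm_sq]
    apply Finset.sum_le_sum
    intro i _
    by_cases h : i ∈ Istar \ I
    · have := hx0 i (Finset.mem_sdiff.mp h).2
      simp only [restr, if_pos h, Pi.sub_apply, this]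
      ring_nf
      exact le_refl _
    · simp only [restr, if_neg h]
      nlinarith [sq_nonneg ((x - xstar) i)]
  have hAb : A.mulVec x - b = A.mulVec (x - xstar) := by
    rw [hb, Matrix.mulVec_sub]
  rw [hAb]
  have h1δ : (0:ℝ) < 1 - δ := by linarith
  have hNpos : 0 ≤ (nrm (restr xstar (Istar \ I)))^2 := sq_nonneg _
  have hcoef : (1 - 2*δ)^2/(2*(1-δ)) ≤ (1-δ)/2 := by
    rw [div_le_div_iff₀ (by linarith) (by norm_num)]
    nlinarith
  calc ((1 - 2*δ)^2/(2*(1-δ))) * (nrm (restr xstar (Istar \ I)))^2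
      ≤ ((1-δ)/2) * (nrm (restr xstar (Istar \ I)))^2 := by
        apply mul_le_mul_of_nonneg_right hcoef hNpos
    _ ≤ ((1-δ)/2) * (nrm (x - xstar))^2 := by
        apply mul_le_mul_of_nonneg_left hN (by linarith)
    _ ≤ (1/2) * (nrm (A.mulVec (x - xstar)))^2 := by linarith
end
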